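/- arXiv:1607.07978 — 12 statements merged into one kernel-verified Lean document; each statement's English description precedes it below -/
import Mathlib

section
/- Let P, Q be preordered sets such that every nonempty subset of Q has a greatest lower bound in Q. If Q is Tukey reducible to P (there exists a map P → Q sending cofinal sets to cofinal sets), then there exists a monotone cofinal map from P to Q. -/
/-- A subset `A` of a preordered set `P` is cofinal if every element of `P`
lies below some element of `A`. -/
def IsCofinalSet {P : Type*} [Preorder P] (A : Set P) : Prop :=
  ∀ x : P, ∃ a ∈ A, x ≤ a

/-- If every nonempty subset of `Q` has a greatest lower bound and `Q` is Tukey reducible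
to `P` (some map `P → Q` sends cofinal sets to cofinal sets), then there exists a
monotone cofinal map from `P` to `Q`. -/
theorem stmt_1 {P Q : Type*} [Preorder P] [Preorder Q]
    (hglb : ∀ A : Set Q, A.Nonempty → ∃ b : Q, (∀ a ∈ A, b ≤ a) ∧
      ∀ c : Q, (∀ a ∈ A, c ≤ a) → c ≤ b)
    (hT : ∃ f : P → Q, ∀ A : Set P, IsCofinalSet A → IsCofinalSet (f '' A)) :
    ∃ g : P → Q, Monotone g ∧ IsCofinalSet (Set.range g) := by
  obtain ⟨f, hf⟩ := hT
  have hne : ∀ p : P, (f '' {x | p ≤ x}).Nonempty := fun p =>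
    ⟨f p, ⟨p, le_refl p, rfl⟩⟩
  set g : P → Q := fun p => (hglb (f '' {x | p ≤ x}) (hne p)).choose with hg
  have hlb : ∀ p, ∀ a ∈ f '' {x | p ≤ x}, g p ≤ a := fun p =>
    (hglb (f '' {x | p ≤ x}) (hne p)).choose_spec.1
  have hgr : ∀ p, ∀ c : Q, (∀ a ∈ f '' {x | p ≤ x}, c ≤ a) → c ≤ g p := fun p =>
    (hglb (f '' {x | p ≤ x}) (hne p)).choose_spec.2
  refine ⟨g, ?_, ?_⟩
  · intro p p' hpp'
    exact hgr p' (g p) (fun a ⟨x, hx, hfx⟩ => hlb p a ⟨x, le_trans hpp' hx, hfx⟩)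
  · intro q
    by_contra hcon
    push_neg at hcon
    have hA : IsCofinalSet {p : P | ¬ q ≤ f p} := by
      intro p
      by_contra h
      push_neg at h
      have : q ≤ g p := hgr p q (by
        rintro a ⟨x, hx, rfl⟩
        by_contra hq
        exact h x hq hx)
      exact absurd this (by simpa using hcon (g p) ⟨p, rfl⟩)
    obtain ⟨a, ⟨x, hx, rfl⟩, hqa⟩ := hf _ hA q
    exact hx hqa
end

section
/- If a preordered set P admits a monotone cofinal map from ω^ω (ordered coordinatewise), then both add(P) and cof(P) belong to the set {1, ω} ∪ [𝔟, 𝔡], i.e., each of these cardinals is either 1, or ω, or lies between the bounding number 𝔟 and the dominating number 𝔡. -/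
universe u

/-- A subset `A` of a preordered set `P` is bounded if some element of `P`
dominates all elements of `A`. -/
def IsBoundedSet {P : Type*} [Preorder P] (A : Set P) : Prop :=
  ∃ x : P, ∀ a ∈ A, a ≤ x

/-- `cofP P` is the smallest cardinality of a cofinal subset of `P`. -/
noncomputable def cofP (P : Type*) [Preorder P] : Cardinal :=
  sInf {c : Cardinal | ∃ A : Set P, IsCofinalSet A ∧ Cardinal.mk A = c}

open Classical in
/-- `addP P` is the smallest cardinality of an unbounded subset of `P`,
or `1` if `P` is bounded. -/
noncomputable def addP (P : Type*) [Preorder P] : Cardinal :=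
  if IsBoundedSet (Set.univ : Set P) then 1
  else sInf {c : Cardinal | ∃ A : Set P, ¬ IsBoundedSet A ∧ Cardinal.mk A = c}

/-- The eventual domination preorder `≤*` on `ω^ω`. -/
def evLE (f g : ℕ → ℕ) : Prop := ∀ᶠ n in Filter.atTop, f n ≤ g n

/-- The dominating number `𝔡`: the least cardinality of a subset of `ω^ω`
cofinal in the eventual domination order. -/
noncomputable def dNum : Cardinal :=
  sInf {c : Cardinal | ∃ D : Set (ℕ → ℕ), (∀ f : ℕ → ℕ, ∃ g ∈ D, evLE f g) ∧
    Cardinal.mk D = c}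

/-- The bounding number `𝔟`: the least cardinality of a subset of `ω^ω`
unbounded in the eventual domination order. -/
noncomputable def bNum : Cardinal :=
  sInf {c : Cardinal | ∃ B : Set (ℕ → ℕ), (¬ ∃ g : ℕ → ℕ, ∀ f ∈ B, evLE f g) ∧
    Cardinal.mk B = c}

/- ### Auxiliary lemmas -/

lemma aux_dNum_infinite : Cardinal.aleph0 ≤ dNum := by
  apply le_csInf
  · exact ⟨Cardinal.mk (Set.univ : Set (ℕ → ℕ)), Set.univ,
      fun f => ⟨f, trivial, Filter.Eventually.of_forall fun n => le_rfl⟩, rfl⟩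
  rintro c ⟨D, hD, rfl⟩
  by_contra hc
  push_neg at hc
  have hfin : D.Finite := Cardinal.lt_aleph0_iff_set_finite.mp hc
  obtain ⟨g, hg, hF⟩ := hD (fun n => (hfin.toFinset.sup fun g : ℕ → ℕ => g n) + 1)
  obtain ⟨n, hn⟩ := hF.exists
  have h2 : g n ≤ hfin.toFinset.sup fun g : ℕ → ℕ => g n :=
    Finset.le_sup (f := fun g : ℕ → ℕ => g n) (by simpa using hg)
  have h3 : (hfin.toFinset.sup fun g : ℕ → ℕ => g n) + 1 ≤ g n := hn
  exact Nat.not_succ_le_self _ (h3.trans h2)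

/-- A family of size `< 𝔟` is `≤*`-bounded. -/
lemma aux_bound_of_small {S : Set (ℕ → ℕ)} (hS : Cardinal.mk S < bNum) :
    ∃ β, ∀ α ∈ S, evLE α β := by
  by_contra hcon
  have h := csInf_le' (s := {c : Cardinal | ∃ B : Set (ℕ → ℕ),
    (¬ ∃ g : ℕ → ℕ, ∀ f ∈ B, evLE f g) ∧ Cardinal.mk B = c}) ⟨S, hcon, rfl⟩
  exact absurd (show bNum ≤ _ from h) (not_le.mpr hS)

/-- From an `≤*`-bound we get coordinatewise bounds of a special countable form. -/
lemma aux_evLE_coord {α β : ℕ → ℕ} (h : evLE α β) :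
    ∃ k : ℕ, ∀ n, α n ≤ max (β n) k := by
  obtain ⟨N, hN⟩ := Filter.eventually_atTop.mp h
  refine ⟨(Finset.range N).sup α, fun n => ?_⟩
  rcases lt_or_ge n N with hn | hn
  · exact le_max_of_le_right (Finset.le_sup (Finset.mem_range.mpr hn))
  · exact le_max_of_le_left (hN n hn)

section Main

variable {P : Type u} [Preorder P] (f : (ℕ → ℕ) → P)

lemma aux_dir (hf : Monotone f) (hcof : ∀ p : P, ∃ α, p ≤ f α) :
    ∀ p q : P, ∃ r, p ≤ r ∧ q ≤ r := by
  intro p q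
  obtain ⟨α, hα⟩ := hcof p
  obtain ⟨β, hβ⟩ := hcof q
  exact ⟨f (α ⊔ β), hα.trans (hf le_sup_left), hβ.trans (hf le_sup_right)⟩

/-- Key lemma: a subset of `P` of size `< 𝔟` is dominated by a countable family. -/
lemma aux_key (hf : Monotone f) (hcof : ∀ p : P, ∃ α, p ≤ f α) (A : Set P)
    (hA : Cardinal.mk A < Cardinal.lift.{u} bNum) :
    ∃ φ : ℕ → P, ∀ a ∈ A, ∃ k, a ≤ φ k := by
  choose α hα using fun a : A => hcof a.1
  have hrange : Cardinal.mk (Set.range α) < bNum := by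
    have h1 : Cardinal.lift.{u} (Cardinal.mk (Set.range α)) ≤
        Cardinal.lift.{0} (Cardinal.mk A) := Cardinal.mk_range_le_lift
    rw [Cardinal.lift_uzero] at h1
    exact Cardinal.lift_lt.mp (lt_of_le_of_lt h1 hA)
  obtain ⟨β, hβ⟩ := aux_bound_of_small hrange
  refine ⟨fun k => f (fun n => max (β n) k), fun a ha => ?_⟩
  obtain ⟨k, hk⟩ := aux_evLE_coord (hβ _ ⟨⟨a, ha⟩, rfl⟩)
  exact ⟨k, (hα ⟨a, ha⟩).trans (hf hk)⟩

omit [Preorder P] in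
/-- The range of the countable family from `aux_key` has cardinality at most `ℵ₀`. -/
lemma aux_range_le (φ : ℕ → P) :
    Cardinal.mk (Set.range φ) ≤ Cardinal.aleph0 := by
  have h1 : Cardinal.lift.{0} (Cardinal.mk (Set.range φ)) ≤
      Cardinal.lift.{u} (Cardinal.mk ℕ) := Cardinal.mk_range_le_lift
  rw [Cardinal.lift_uzero, Cardinal.mk_nat, Cardinal.lift_aleph0] at h1
  exact h1

lemma aux_cof_nonempty :
    {c : Cardinal | ∃ A : Set P, IsCofinalSet A ∧ Cardinal.mk A = c}.Nonempty :=
  ⟨_, Set.univ, fun p => ⟨p, trivial, le_rfl⟩, rfl⟩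

/-- `cof P ≤ 𝔡`. -/
lemma aux_cof_le (hf : Monotone f) (hcof : ∀ p : P, ∃ α, p ≤ f α) :
    cofP P ≤ Cardinal.lift.{u} dNum := by
  have hne : {c : Cardinal | ∃ D : Set (ℕ → ℕ), (∀ g : ℕ → ℕ, ∃ d ∈ D, evLE g d) ∧
      Cardinal.mk D = c}.Nonempty :=
    ⟨Cardinal.mk (Set.univ : Set (ℕ → ℕ)), Set.univ,
      fun g => ⟨g, trivial, Filter.Eventually.of_forall fun n => le_rfl⟩, rfl⟩
  obtain ⟨D, hD, hDc⟩ := csInf_mem hne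
  set φ : (D × ℕ) → P := fun dk => f (fun n => max (dk.1.1 n) dk.2) with hφ
  have hcofinal : IsCofinalSet (Set.range φ) := by
    intro p
    obtain ⟨α, hα⟩ := hcof p
    obtain ⟨d, hd, hdom⟩ := hD α
    obtain ⟨k, hk⟩ := aux_evLE_coord hdom
    exact ⟨φ (⟨d, hd⟩, k), ⟨(⟨d, hd⟩, k), rfl⟩, hα.trans (hf hk)⟩
  have hsmall : Cardinal.mk (Set.range φ) ≤ Cardinal.lift.{u} dNum := by
    have h1 : Cardinal.lift.{0} (Cardinal.mk (Set.range φ)) ≤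
        Cardinal.lift.{u} (Cardinal.mk (D × ℕ)) := Cardinal.mk_range_le_lift
    rw [Cardinal.lift_uzero] at h1
    have h2 : Cardinal.mk (D × ℕ) = dNum := by
      rw [Cardinal.mk_prod, Cardinal.lift_uzero, Cardinal.lift_uzero, Cardinal.mk_nat,
        Cardinal.mul_aleph0_eq (hDc ▸ aux_dNum_infinite), hDc]
      rfl
    rwa [h2] at h1
  exact le_trans (csInf_le' ⟨Set.range φ, hcofinal, rfl⟩) hsmall

/-- The `cof` half of the theorem. -/
lemma aux_cof_part (hf : Monotone f) (hcof : ∀ p : P, ∃ α, p ≤ f α) :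
    cofP P = 1 ∨ cofP P = Cardinal.aleph0 ∨
      (Cardinal.lift.{u} bNum ≤ cofP P ∧ cofP P ≤ Cardinal.lift.{u} dNum) := by
  by_cases hlt : cofP P < Cardinal.lift.{u} bNum
  · obtain ⟨A, hA, hAc⟩ := csInf_mem (aux_cof_nonempty (P := P))
    have hAc' : Cardinal.mk A = cofP P := hAc
    obtain ⟨φ, hφ⟩ := aux_key f hf hcof A (hAc' ▸ hlt)
    have hcof2 : IsCofinalSet (Set.range φ) := by
      intro p
      obtain ⟨a, haA, hpa⟩ := hA p
      obtain ⟨k, hk⟩ := hφ a haA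
      exact ⟨φ k, ⟨k, rfl⟩, hpa.trans hk⟩
    have hle : cofP P ≤ Cardinal.aleph0 :=
      le_trans (csInf_le' ⟨Set.range φ, hcof2, rfl⟩) (aux_range_le φ)
    rcases lt_or_eq_of_le hle with hlt2 | heq
    · left
      have hfin : A.Finite :=
        Cardinal.lt_aleph0_iff_set_finite.mp (hAc' ▸ hlt2 : Cardinal.mk A < Cardinal.aleph0)
      haveI : Nonempty P := ⟨f (fun _ => 0)⟩
      haveI : IsDirected P (· ≤ ·) := ⟨aux_dir f hf hcof⟩
      obtain ⟨x, hx⟩ := hfin.toFinset.exists_le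
      obtain ⟨a0, ha0, hxa0⟩ := hA x
      have h1mem : (1 : Cardinal) ∈
          {c : Cardinal | ∃ A : Set P, IsCofinalSet A ∧ Cardinal.mk A = c} := by
        refine ⟨{a0}, fun p => ⟨a0, rfl, ?_⟩, Cardinal.mk_singleton a0⟩
        obtain ⟨a, haA, hpa⟩ := hA p
        exact hpa.trans ((hx a (hfin.mem_toFinset.mpr haA)).trans hxa0)
      refine le_antisymm (csInf_le' h1mem) ?_
      rw [← hAc', Cardinal.one_le_iff_ne_zero, Cardinal.mk_ne_zero_iff]
      exact ⟨⟨a0, ha0⟩⟩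
    · exact Or.inr (Or.inl heq)
  · exact Or.inr (Or.inr ⟨not_lt.mp hlt, aux_cof_le f hf hcof⟩)

/-- The `add` half of the theorem. -/
lemma aux_add_part (hf : Monotone f) (hcof : ∀ p : P, ∃ α, p ≤ f α) :
    addP P = 1 ∨ addP P = Cardinal.aleph0 ∨
      (Cardinal.lift.{u} bNum ≤ addP P ∧ addP P ≤ Cardinal.lift.{u} dNum) := by
  by_cases hb : IsBoundedSet (Set.univ : Set P)
  · left
    simp [addP, hb]
  · have haddP : addP P =
        sInf {c : Cardinal | ∃ A : Set P, ¬ IsBoundedSet A ∧ Cardinal.mk A = c} := by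
      simp [addP, hb]
    rw [haddP]
    set s := {c : Cardinal | ∃ A : Set P, ¬ IsBoundedSet A ∧ Cardinal.mk A = c} with hs
    have hne : s.Nonempty := ⟨_, Set.univ, hb, rfl⟩
    haveI : Nonempty P := ⟨f (fun _ => 0)⟩
    haveI : IsDirected P (· ≤ ·) := ⟨aux_dir f hf hcof⟩
    have hgea : Cardinal.aleph0 ≤ sInf s := by
      apply le_csInf hne
      rintro c ⟨A, hAun, rfl⟩
      by_contra hc
      push_neg at hc
      have hfin : A.Finite := Cardinal.lt_aleph0_iff_set_finite.mp hc
      obtain ⟨x, hx⟩ := hfin.toFinset.exists_le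
      exact hAun ⟨x, fun a ha => hx a (hfin.mem_toFinset.mpr ha)⟩
    by_cases hlt : sInf s < Cardinal.lift.{u} bNum
    · obtain ⟨A, hAun, hAc⟩ := csInf_mem hne
      obtain ⟨φ, hφ⟩ := aux_key f hf hcof A (hAc ▸ hlt)
      have hun : ¬ IsBoundedSet (Set.range φ) := by
        rintro ⟨x, hx⟩
        refine hAun ⟨x, fun a ha => ?_⟩
        obtain ⟨k, hk⟩ := hφ a ha
        exact hk.trans (hx _ ⟨k, rfl⟩)
      have hle : sInf s ≤ Cardinal.aleph0 :=
        le_trans (csInf_le' ⟨Set.range φ, hun, rfl⟩) (aux_range_le φ)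
      exact Or.inr (Or.inl (le_antisymm hle hgea))
    · refine Or.inr (Or.inr ⟨not_lt.mp hlt, ?_⟩)
      obtain ⟨C, hC, hCc⟩ := csInf_mem (aux_cof_nonempty (P := P))
      have hCun : ¬ IsBoundedSet C := by
        rintro ⟨x, hx⟩
        refine hb ⟨x, fun p _ => ?_⟩
        obtain ⟨a, haC, hpa⟩ := hC p
        exact hpa.trans (hx a haC)
      have h1 : sInf s ≤ cofP P := csInf_le' ⟨C, hCun, hCc⟩
      exact h1.trans (aux_cof_le f hf hcof)

end Main

/-- If a preordered set `P` admits a monotone cofinal map from `ω^ω` (with the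
coordinatewise order), then both `add P` and `cof P` lie in `{1, ω} ∪ [𝔟, 𝔡]`. -/
theorem stmt_4 {P : Type u} [Preorder P]
    (h : ∃ f : (ℕ → ℕ) → P, Monotone f ∧ ∀ p : P, ∃ α : ℕ → ℕ, p ≤ f α) :
    (addP P = 1 ∨ addP P = Cardinal.aleph0 ∨
      (Cardinal.lift.{u} bNum ≤ addP P ∧ addP P ≤ Cardinal.lift.{u} dNum)) ∧
    (cofP P = 1 ∨ cofP P = Cardinal.aleph0 ∨
      (Cardinal.lift.{u} bNum ≤ cofP P ∧ cofP P ≤ Cardinal.lift.{u} dNum)) := by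
  obtain ⟨f, hf, hcof⟩ := h
  exact ⟨aux_add_part f hf hcof, aux_cof_part f hf hcof⟩
end

section
/- Let f : ω^ω → P be a monotone map into a directed preordered set P with cof(P) ≤ ω. Then for every α ∈ ω^ω there exists k ∈ ω such that the image f[{β ∈ ω^ω : β restricted to k equals α restricted to k}] is bounded in P. -/
/-- Let `f : ω^ω → P` be a monotone map into a directed preordered set `P` with a
countable cofinal subset.  Then for every `α ∈ ω^ω` there exists `k ∈ ω` such that the
image of `{β : β | k = α | k}` under `f` is bounded in `P`. -/
theorem stmt_5 {P : Type*} [Preorder P] (f : (ℕ → ℕ) → P) (hf : Monotone f)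
    (hdir : ∀ x y : P, ∃ z : P, x ≤ z ∧ y ≤ z)
    (hcof : ∃ D : Set P, D.Countable ∧ ∀ x : P, ∃ d ∈ D, x ≤ d) :
    ∀ α : ℕ → ℕ, ∃ k : ℕ, ∃ b : P,
      ∀ β : ℕ → ℕ, (∀ i < k, β i = α i) → f β ≤ b := by
  intro α
  obtain ⟨D, hDc, hDcof⟩ := hcof
  have hDne : D.Nonempty := by
    obtain ⟨d, hd, _⟩ := hDcof (f α); exact ⟨d, hd⟩
  obtain ⟨e, he⟩ := Set.Countable.exists_eq_range hDc hDne
  by_contra h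
  push_neg at h
  have hchoice : ∀ k : ℕ, ∃ β : ℕ → ℕ, (∀ i < k, β i = α i) ∧ ¬ f β ≤ e k := by
    intro k
    obtain ⟨β, hβ1, hβ2⟩ := h k (e k)
    exact ⟨β, hβ1, hβ2⟩
  choose β hβ1 hβ2 using hchoice
  set γ : ℕ → ℕ := fun i => max (α i) ((Finset.range (i + 1)).sup (fun k => β k i))
  have hle : ∀ k, β k ≤ γ := by
    intro k i
    rcases lt_or_ge i k with hik | hik
    · rw [hβ1 k i hik]; exact le_max_left _ _
    · exact le_trans (Finset.le_sup (f := fun k => β k i) (Finset.mem_range.mpr (Nat.lt_succ_of_le hik)))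
        (le_max_right _ _)
  obtain ⟨d, hdD, hd⟩ := hDcof (f γ)
  rw [he] at hdD
  obtain ⟨m, rfl⟩ := hdD
  exact hβ2 m (le_trans (hf (hle m)) hd)
end

section
/- There is no monotone cofinal map from ω^ω (with the coordinatewise order) to the poset κ^𝔡 (functions from the dominating number 𝔡 to an infinite cardinal κ, ordered coordinatewise). Consequently, for any infinite cardinal κ with ω^ω-dominated power, the least cardinal λ with ω^ω ⋡ κ^λ satisfies λ ≤ 𝔡. -/
/-- The cardinal `c` viewed as a (well-ordered) poset: the ordinals below `c.ord`. -/
abbrev CardPoset (c : Cardinal) := {o : Ordinal // o < c.ord}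

/-!
Enumerate a dominating family `D` of size `𝔡` together with all its shifts `d + c`
(`c ∈ ℕ`); since `𝔡` is infinite this gives `β : 𝔡 → ω^ω`, cofinal for the pointwise order.
Given a monotone `f : ω^ω → κ^𝔡`, diagonalize: `g i := f (β i) i + 1` lies in `κ` because
`κ.ord` is a limit. If `g ≤ f α`, choose `i` with `α ≤ β i`; then
`g i ≤ f α i ≤ f (β i) i < g i`.
-/

open Cardinal

universe u

theorem not_exists_monotone_cofinal_pi {P I Q : Type*} [Preorder P] [Preorder Q] [NoMaxOrder Q]
    {β : I → P} (hβ : ∀ a, ∃ i, a ≤ β i) :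
    ¬ ∃ f : P → I → Q, Monotone f ∧ ∀ g : I → Q, ∃ a, g ≤ f a := by
  rintro ⟨f, hmono, hcof⟩
  choose g hg using fun i => exists_gt (f (β i) i)
  obtain ⟨a, ha⟩ := hcof g
  obtain ⟨i, hi⟩ := hβ a
  exact lt_irrefl _ ((ha i).trans (hmono hi i) |>.trans_lt (hg i))

theorem CardPoset.noMaxOrder {κ : Cardinal} (hκ : ℵ₀ ≤ κ) : NoMaxOrder (CardPoset κ) where
  exists_gt o := ⟨⟨Order.succ o.1, (isSuccLimit_ord hκ).succ_lt o.2⟩, Order.lt_succ o.1⟩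

theorem exists_forall_lt_of_finite {D : Set (ℕ → ℕ)} (hD : D.Finite) :
    ∃ F : ℕ → ℕ, ∀ g ∈ D, ∀ n, g n < F n :=
  ⟨fun n => hD.toFinset.sup (· n) + 1, fun _ hg n =>
    Nat.lt_succ_of_le (Finset.le_sup (f := (· n)) (hD.mem_toFinset.mpr hg))⟩

theorem exists_le_add_const_of_evLE {α d : ℕ → ℕ} (h : evLE α d) :
    ∃ c : ℕ, ∀ n, α n ≤ d n + c := by
  obtain ⟨N, hN⟩ := Filter.eventually_atTop.mp h
  refine ⟨(Finset.range N).sup α, fun n => ?_⟩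
  rcases le_or_gt N n with hn | hn
  · exact le_add_right (hN n hn)
  · exact le_add_left (Finset.le_sup (Finset.mem_range.mpr hn))

theorem exists_dominating_mk_eq_dNum :
    ∃ D : Set (ℕ → ℕ), (∀ f : ℕ → ℕ, ∃ g ∈ D, evLE f g) ∧ #D = dNum :=
  csInf_mem (s := {c | ∃ D : Set (ℕ → ℕ), (∀ f, ∃ g ∈ D, evLE f g) ∧ #D = c}) ⟨_, Set.univ,
    fun f => ⟨f, trivial, .of_forall fun _ => le_rfl⟩, rfl⟩

theorem aleph0_le_dNum : ℵ₀ ≤ dNum := by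
  obtain ⟨D, hD, hmk⟩ := exists_dominating_mk_eq_dNum
  by_contra! hlt
  rw [← hmk, lt_aleph0_iff_set_finite] at hlt
  obtain ⟨F, hF⟩ := exists_forall_lt_of_finite hlt
  obtain ⟨d, hd, hdom⟩ := hD F
  obtain ⟨n, hn⟩ := hdom.exists
  exact (hF d hd n).not_ge hn

theorem mk_cardPoset (c : Cardinal.{u}) : #(CardPoset c) = lift.{u + 1} c := by
  have h := mk_Iio_ordinal c.ord
  rwa [card_ord] at h

theorem exists_pointwise_cofinal_family_dNum :
    ∃ β : CardPoset dNum → ℕ → ℕ, ∀ α, ∃ i, α ≤ β i := by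
  obtain ⟨D, hD, hmk⟩ := exists_dominating_mk_eq_dNum
  have hcard : lift.{1} #(D × ℕ) = lift.{0} #(CardPoset dNum) := by
    rw [mk_prod, mk_nat, lift_id, lift_id, hmk, mul_aleph0_eq aleph0_le_dNum, mk_cardPoset,
      lift_uzero]
  obtain ⟨e⟩ := lift_mk_eq'.mp hcard
  refine ⟨fun i n => ((e.symm i).1 : ℕ → ℕ) n + (e.symm i).2, fun α => ?_⟩
  obtain ⟨d, hd, hdom⟩ := hD α
  obtain ⟨c, hc⟩ := exists_le_add_const_of_evLE hdom
  exact ⟨e (⟨d, hd⟩, c), fun n => by simpa using hc n⟩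

/-- There is no monotone cofinal map from `ω^ω` to the poset `κ^𝔡` (functions from the
dominating number `𝔡` to an infinite cardinal `κ`, ordered coordinatewise); consequently
the least cardinal `λ` with `ω^ω ⋡ κ^λ` satisfies `λ ≤ 𝔡`. -/
theorem stmt_6 (κ : Cardinal.{0}) (hκ : Cardinal.aleph0 ≤ κ) :
    (¬ ∃ f : (ℕ → ℕ) → (CardPoset dNum → CardPoset κ),
        Monotone f ∧ ∀ g : CardPoset dNum → CardPoset κ, ∃ α : ℕ → ℕ, g ≤ f α) ∧
    sInf {lam : Cardinal.{0} | ¬ ∃ f : (ℕ → ℕ) → (CardPoset lam → CardPoset κ),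
        Monotone f ∧ ∀ g : CardPoset lam → CardPoset κ, ∃ α : ℕ → ℕ, g ≤ f α} ≤ dNum := by
  have := CardPoset.noMaxOrder hκ
  obtain ⟨β, hβ⟩ := exists_pointwise_cofinal_family_dNum
  have hnot := not_exists_monotone_cofinal_pi (Q := CardPoset κ) hβ
  exact ⟨hnot, csInf_le' hnot⟩
end

section
/- Let X be a regular topological space and D a countable discrete subspace of X which is a Ḡ_δ-set (i.e., D = ⋂_{n∈ω} W_n = ⋂_{n∈ω} closure(W_n) for a sequence of open sets W_n). Then D is strongly discrete: each point x ∈ D has an open neighborhood U_x such that the family (U_x)_{x∈D} is discrete in X. -/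
open Set Topology

/-- Strong recursion helper: builds a sequence where the value at `n` may
depend on all values at `k < n`. -/
private noncomputable def seqRecAux {α : Type*} (d : α) (step : ℕ → (ℕ → α) → α) : ℕ → α
  | n => step n (fun k => if _ : k < n then seqRecAux d step k else d)
  termination_by n => n

private theorem seqRecAux_eq {α : Type*} (d : α) (step : ℕ → (ℕ → α) → α) (n : ℕ) :
    seqRecAux d step n = step n (fun k => if _ : k < n then seqRecAux d step k else d) := by
  rw [seqRecAux]

/-- A countable discrete `Ḡ_δ`-subset `D` of a regular space is strongly discrete:
each point `x ∈ D` has an open neighborhood `U x` so that the family `(U x)_{x ∈ D}`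
is discrete in `X`. -/
theorem stmt_8 {X : Type*} [TopologicalSpace X] [RegularSpace X]
    (D : Set X) (hcount : D.Countable)
    (hdisc : ∀ x ∈ D, ∃ U : Set X, IsOpen U ∧ x ∈ U ∧ U ∩ D = {x})
    (W : ℕ → Set X) (hWopen : ∀ n, IsOpen (W n))
    (hD1 : D = ⋂ n, W n) (hD2 : D = ⋂ n, closure (W n)) :
    ∃ U : X → Set X, (∀ x ∈ D, IsOpen (U x) ∧ x ∈ U x) ∧
      ∀ z : X, ∃ V ∈ nhds z, {x | x ∈ D ∧ (V ∩ U x).Nonempty}.Subsingleton := by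
  classical
  -- an injective enumeration of D
  obtain ⟨f, hf⟩ : ∃ f : D → ℕ, Function.Injective f :=
    Set.countable_iff_exists_injective.mp hcount
  -- the isolating neighbourhoods
  choose! S hSopen hSmem hScap using hdisc
  -- points of D are in all W n
  have hDW : ∀ x ∈ D, ∀ n, x ∈ W n := by
    intro x hx n
    rw [hD1] at hx
    exact Set.mem_iInter.mp hx n
  -- the invariant
  set Inv : ℕ → Set X → Prop := fun n A =>
    (∀ d : D, f d = n → (d : X) ∈ A) ∧
    (∀ j ≤ n, closure A ⊆ W j) ∧
    (∀ d : D, (d : X) ∈ closure A → f d = n) with hInv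
  -- key step existence
  have key : ∀ (n : ℕ) (prev : ℕ → Set X), ∃ A : Set X, IsOpen A ∧
      ((∀ k < n, Inv k (prev k)) →
        Inv n A ∧ ∀ k < n, closure A ∩ closure (prev k) = ∅) := by
    intro n prev
    by_cases hinv : ∀ k < n, Inv k (prev k)
    · by_cases hex : ∃ d : D, f d = n
      · obtain ⟨d, hd⟩ := hex
        have hxD : (d : X) ∈ D := d.2
        set G : Set X := (⋂ j ∈ Finset.range (n + 1), W j) ∩ S (d : X) ∩
          ⋂ k ∈ Finset.range n, (closure (prev k))ᶜ with hG
        have hGopen : IsOpen G := by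
          refine IsOpen.inter (IsOpen.inter ?_ (hSopen _ hxD)) ?_
          · exact isOpen_biInter_finset fun j _ => hWopen j
          · exact isOpen_biInter_finset fun k _ => (isClosed_closure).isOpen_compl
        have hxG : (d : X) ∈ G := by
          refine ⟨⟨Set.mem_biInter fun j _ => hDW _ hxD j, hSmem _ hxD⟩, ?_⟩
          refine Set.mem_biInter fun k hk => ?_
          intro hcl
          have hk' : k < n := Finset.mem_range.mp hk
          have := ((hinv k hk').2.2 d hcl)
          omega
        obtain ⟨C, hCnhds, hCclosed, hCG⟩ :=
          exists_mem_nhds_isClosed_subset (hGopen.mem_nhds hxG)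
        refine ⟨interior C, isOpen_interior, fun _ => ?_⟩
        have hclA : closure (interior C) ⊆ G := by
          calc closure (interior C) ⊆ closure C := closure_mono interior_subset
          _ = C := hCclosed.closure_eq
          _ ⊆ G := hCG
        constructor
        · refine ⟨?_, ?_, ?_⟩
          · intro d' hd'
            have : d' = d := hf (hd'.trans hd.symm)
            rw [this]
            exact mem_interior_iff_mem_nhds.mpr hCnhds
          · intro j hj x hx
            have := (hclA hx).1.1
            exact Set.mem_iInter₂.mp this j (Finset.mem_range.mpr (by omega))
          · intro d' hd'
            have hSx : (d' : X) ∈ S (d : X) ∩ D := ⟨(hclA hd').1.2, d'.2⟩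
            rw [hScap _ hxD] at hSx
            have : d' = d := Subtype.ext hSx
            rw [this, hd]
        · intro k hk
          apply Set.eq_empty_of_forall_notMem
          rintro x ⟨hx1, hx2⟩
          have := (hclA hx1).2
          exact Set.mem_iInter₂.mp this k (Finset.mem_range.mpr hk) hx2
      · refine ⟨∅, isOpen_empty, fun _ => ⟨⟨?_, ?_, ?_⟩, ?_⟩⟩
        · intro d hd; exact absurd ⟨d, hd⟩ hex
        · intro j _; rw [closure_empty]; exact empty_subset _
        · intro d hd; rw [closure_empty] at hd; exact absurd hd (notMem_empty _)
        · intro k _; rw [closure_empty, empty_inter]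
    · exact ⟨∅, isOpen_empty, fun h => absurd h hinv⟩
  choose step hstep1 hstep2 using key
  set F : ℕ → Set X := seqRecAux ∅ step with hFdef
  have hF : ∀ n, F n = step n (fun k => if _ : k < n then F k else ∅) := fun n =>
    seqRecAux_eq ∅ step n
  -- openness of F n
  have hFopen : ∀ n, IsOpen (F n) := by
    intro n; rw [hF n]; exact hstep1 _ _
  -- the invariant holds for all n
  have invAll : ∀ n, Inv n (F n) ∧ ∀ k < n, closure (F n) ∩ closure (F k) = ∅ := by
    intro n
    induction n using Nat.strong_induction_on with
    | _ n ih =>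
      have hprev : ∀ k < n, Inv k ((fun k => if _ : k < n then F k else ∅) k) := by
        intro k hk
        simp only [dif_pos hk]
        exact (ih k hk).1
      have := hstep2 n (fun k => if _ : k < n then F k else ∅) hprev
      rw [← hF n] at this
      refine ⟨this.1, fun k hk => ?_⟩
      have := this.2 k hk
      simpa [dif_pos hk] using this
  -- pairwise disjoint closures
  have hdisj : ∀ n m, n ≠ m → closure (F n) ∩ closure (F m) = ∅ := by
    intro n m hnm
    rcases lt_or_gt_of_ne hnm with h | h
    · rw [Set.inter_comm]; exact (invAll m).2 n h
    · exact (invAll n).2 m h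
  -- define U
  refine ⟨fun x => if h : x ∈ D then F (f ⟨x, h⟩) else ∅, ?_, ?_⟩
  · intro x hx
    simp only [dif_pos hx]
    exact ⟨hFopen _, (invAll (f ⟨x, hx⟩)).1.1 ⟨x, hx⟩ rfl⟩
  · intro z
    by_cases hz : z ∈ D
    · refine ⟨F (f ⟨z, hz⟩), (hFopen _).mem_nhds ((invAll _).1.1 ⟨z, hz⟩ rfl), ?_⟩
      -- any x in the index set equals z
      have hkey : ∀ x, x ∈ {x | x ∈ D ∧ (F (f ⟨z, hz⟩) ∩
          (if h : x ∈ D then F (f ⟨x, h⟩) else ∅)).Nonempty} → x = z := by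
        rintro x ⟨hx, hne⟩
        simp only [dif_pos hx] at hne
        by_contra hxz
        have hfne : f ⟨z, hz⟩ ≠ f ⟨x, hx⟩ := by
          intro h; exact hxz (congrArg Subtype.val (hf h)).symm
        obtain ⟨p, hp1, hp2⟩ := hne
        have : p ∈ closure (F (f ⟨z, hz⟩)) ∩ closure (F (f ⟨x, hx⟩)) :=
          ⟨subset_closure hp1, subset_closure hp2⟩
        rw [hdisj _ _ hfne] at this
        exact this
      intro x hx y hy
      rw [hkey x hx, hkey y hy]
    · -- z is outside some closure (W n)
      have : z ∉ ⋂ n, closure (W n) := by rw [← hD2]; exact hz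
      obtain ⟨n, hn⟩ : ∃ n, z ∉ closure (W n) := by
        by_contra h; push_neg at h; exact this (Set.mem_iInter.mpr h)
      set V : Set X := (closure (W n))ᶜ ∩
        ⋂ k ∈ Finset.range n, (if z ∈ closure (F k) then Set.univ else (closure (F k))ᶜ)
        with hV
      have hVopen : IsOpen V := by
        refine IsOpen.inter (isClosed_closure).isOpen_compl ?_
        refine isOpen_biInter_finset fun k _ => ?_
        split
        · exact isOpen_univ
        · exact (isClosed_closure).isOpen_compl
      have hzV : z ∈ V := by
        refine ⟨hn, Set.mem_biInter fun k _ => ?_⟩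
        by_cases h : z ∈ closure (F k)
        · rw [if_pos h]; exact Set.mem_univ _
        · rw [if_neg h]; exact h
      refine ⟨V, hVopen.mem_nhds hzV, ?_⟩
      -- for any x in the index set, z ∈ closure (F (f x))
      have hkey : ∀ x (hx : x ∈ D), (V ∩ (if h : x ∈ D then F (f ⟨x, h⟩) else ∅)).Nonempty →
          z ∈ closure (F (f ⟨x, hx⟩)) := by
        intro x hx hne
        simp only [dif_pos hx] at hne
        obtain ⟨p, hp1, hp2⟩ := hne
        set m := f ⟨x, hx⟩ with hm
        have hmn : m < n := by
          by_contra hmn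
          push_neg at hmn
          have : p ∈ W n := (invAll m).1.2.1 n hmn (subset_closure hp2)
          exact hp1.1 (subset_closure this)
        have := Set.mem_iInter₂.mp hp1.2 m (Finset.mem_range.mpr hmn)
        by_contra hzc
        rw [if_neg hzc] at this
        exact this (subset_closure hp2)
      rintro x ⟨hx, hnex⟩ y ⟨hy, hney⟩
      have h1 := hkey x hx hnex
      have h2 := hkey y hy hney
      by_contra hxy
      have hfne : f ⟨x, hx⟩ ≠ f ⟨y, hy⟩ := by
        intro h; exact hxy (congrArg Subtype.val (hf h))
      have : z ∈ closure (F (f ⟨x, hx⟩)) ∩ closure (F (f ⟨y, hy⟩)) := ⟨h1, h2⟩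
      rw [hdisj _ _ hfne] at this
      exact this
end

section
/- Every hereditarily Lindelöf Ḡ_δ-subset B of a regular topological space X is ω-Urysohn: every infinite subset D ⊆ B that is closed and discrete in X contains an infinite subset S which is strongly discrete in X (each point of S has an open neighborhood so that these neighborhoods form a discrete family in X). -/
open Set Topology
lemma shrink_open {X : Type*} [TopologicalSpace X] [RegularSpace X] {s : Set X} {a : X}
    (hs : IsOpen s) (ha : a ∈ s) : ∃ U : Set X, IsOpen U ∧ a ∈ U ∧ closure U ⊆ s := by
  obtain ⟨t, ht, htc, hts⟩ := exists_mem_nhds_isClosed_subset (hs.mem_nhds ha)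
  exact ⟨interior t, isOpen_interior, mem_interior_iff_mem_nhds.2 ht,
    (closure_minimal interior_subset htc).trans hts⟩

lemma exists_good_seq {X : Type*} [TopologicalSpace X] [RegularSpace X]
    (W O : ℕ → Set X) (D : Set X) (d : ℕ → X)
    (hdD : ∀ j, d j ∈ D) (hdinj : Function.Injective d)
    (hdW : ∀ j i, d j ∈ W i)
    (hsep : ∀ j, ∃ U₀ : Set X, IsOpen U₀ ∧ d j ∈ U₀ ∧ U₀ ∩ D = {d j})
    (hWopen : ∀ i, IsOpen (W i)) (hOopen : ∀ k, IsOpen (O k)) :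
    ∃ U : ℕ → Set X, (∀ j, IsOpen (U j)) ∧ (∀ j, d j ∈ U j) ∧
      (∀ j i, i ≤ j → U j ⊆ W i) ∧
      (∀ j, closure (U j) ∩ D ⊆ {d j}) ∧
      (∀ i j, i < j → closure (U i) ∩ closure (U j) = ∅) ∧
      (∀ j k, k < j → d j ∉ closure (O k) → U j ∩ O k = ∅) := by
  classical
  set Good : ℕ → Set X → Set X → Prop := fun j K U =>
    IsOpen U ∧ d j ∈ U ∧ (∀ i ≤ j, closure U ⊆ W i) ∧ closure U ∩ D ⊆ {d j} ∧
      closure U ∩ K = ∅ ∧ ∀ k < j, d j ∉ closure (O k) → U ∩ O k = ∅ with hGoodDef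
  have hex : ∀ (j : ℕ) (K : Set X), IsClosed K → d j ∉ K → ∃ U, Good j K U := by
    intro j K hKc hdK
    obtain ⟨U₀, hU₀o, hdU₀, hU₀D⟩ := hsep j
    set T : Set X := (⋂ i ∈ Finset.range (j+1), W i) ∩ Kᶜ ∩ U₀ ∩
      ⋂ k ∈ (Finset.range j).filter (fun k => d j ∉ closure (O k)), (closure (O k))ᶜ with hT
    have hTopen : IsOpen T := by
      refine (((isOpen_biInter_finset (fun i _ => hWopen i)).inter hKc.isOpen_compl).inter
        hU₀o).inter (isOpen_biInter_finset fun k _ => ?_)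
      exact isClosed_closure.isOpen_compl
    have hdT : d j ∈ T := by
      refine ⟨⟨⟨?_, hdK⟩, hdU₀⟩, ?_⟩
      · exact mem_iInter₂.2 fun i _ => hdW j i
      · refine mem_iInter₂.2 fun k hk => ?_
        exact (Finset.mem_filter.1 hk).2
    obtain ⟨U, hUo, hdU, hUT⟩ := shrink_open hTopen hdT
    refine ⟨U, hUo, hdU, ?_, ?_, ?_, ?_⟩
    · intro i hi x hx
      have := (hUT hx).1.1.1
      exact mem_iInter₂.1 this i (Finset.mem_range.2 (Nat.lt_succ_of_le hi))
    · intro x hx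
      have hxU₀ : x ∈ U₀ := (hUT hx.1).1.2
      have : x ∈ U₀ ∩ D := ⟨hxU₀, hx.2⟩
      rw [hU₀D] at this; exact this
    · ext x; simp only [mem_inter_iff, mem_empty_iff_false, iff_false, not_and]
      intro hx; exact (hUT hx).1.1.2
    · intro k hk hkc
      ext x; simp only [mem_inter_iff, mem_empty_iff_false, iff_false, not_and]
      intro hx hxO
      have hkmem : k ∈ (Finset.range j).filter (fun k => d j ∉ closure (O k)) := by
        simp only [Finset.mem_filter, Finset.mem_range]; exact ⟨hk, hkc⟩
      exact mem_iInter₂.1 (hUT (subset_closure hx)).2 k hkmem (subset_closure hxO)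
  set step : ℕ → Set X → Set X := fun j K => if h : ∃ U, Good j K U then h.choose else ∅
    with hstep
  have hstepspec : ∀ j K, (∃ U, Good j K U) → Good j K (step j K) := by
    intro j K h
    simp only [hstep, dif_pos h]
    exact h.choose_spec
  let g : ℕ → Set X × Set X := fun n => Nat.rec
    ((step 0 ∅), closure (step 0 ∅))
    (fun n p => (step (n+1) p.2, p.2 ∪ closure (step (n+1) p.2))) n
  have hg0 : g 0 = (step 0 ∅, closure (step 0 ∅)) := rfl
  have hgs : ∀ n, g (n+1) = (step (n+1) (g n).2, (g n).2 ∪ closure (step (n+1) (g n).2)) :=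
    fun n => rfl
  let Kpre : ℕ → Set X := fun n => Nat.rec ∅ (fun n _ => (g n).2) n
  have hK0 : Kpre 0 = ∅ := rfl
  have hKs : ∀ n, Kpre (n+1) = (g n).2 := fun n => rfl
  have key : ∀ n, Good n (Kpre n) ((g n).1) ∧ IsClosed (g n).2 ∧
      ((g n).2 ∩ D ⊆ d '' Iic n) ∧ (g n).2 = Kpre n ∪ closure ((g n).1) := by
    intro n
    induction n with
    | zero =>
      have h0 : Good 0 ∅ (step 0 ∅) :=
        hstepspec 0 ∅ (hex 0 ∅ isClosed_empty (notMem_empty _))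
      refine ⟨h0, isClosed_closure, ?_, by rw [hK0, empty_union]; rfl⟩
      intro x hx
      have : x ∈ closure (step 0 ∅) ∩ D := hx
      have := h0.2.2.2.1 this
      exact ⟨0, by simp, this.symm ▸ rfl⟩
    | succ n ih =>
      obtain ⟨hGn, hKcl, hKD, hKeq⟩ := ih
      have hdnot : d (n+1) ∉ (g n).2 := by
        intro h
        obtain ⟨i, hi, hdi⟩ := hKD ⟨h, hdD (n+1)⟩
        have h1 := hdinj hdi
        have h2 := mem_Iic.1 hi
        omega
      have hexn : ∃ U, Good (n+1) ((g n).2) U := hex (n+1) _ hKcl hdnot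
      have hGn1 : Good (n+1) (Kpre (n+1)) ((g (n+1)).1) := by
        rw [hKs n, hgs n]
        exact hstepspec _ _ hexn
      refine ⟨hGn1, ?_, ?_, ?_⟩
      · rw [hgs n]
        exact hKcl.union isClosed_closure
      · rw [hgs n]
        intro x hx
        rcases hx.1 with h | h
        · obtain ⟨i, hi, hdi⟩ := hKD ⟨h, hx.2⟩
          exact ⟨i, mem_Iic.2 (le_trans (mem_Iic.1 hi) (by omega)), hdi⟩
        · have hx' : x ∈ closure ((g (n+1)).1) ∩ D := by
            rw [hgs n]; exact ⟨h, hx.2⟩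
          have := hGn1.2.2.2.1 hx'
          exact ⟨n+1, mem_Iic.2 le_rfl, this.symm ▸ rfl⟩
      · rw [hgs n, hKs n]
  have mono : ∀ n i, i ≤ n → closure ((g i).1) ⊆ (g n).2 := by
    intro n
    induction n with
    | zero =>
      intro i hi
      have : i = 0 := Nat.le_zero.1 hi
      subst this
      rw [(key 0).2.2.2, hK0, empty_union]
    | succ n ih =>
      intro i hi
      rcases hi.lt_or_eq with h | h
      · have h' : i ≤ n := by omega
        calc closure ((g i).1) ⊆ (g n).2 := ih i h'
          _ ⊆ (g (n+1)).2 := by rw [(key (n+1)).2.2.2, hKs n]; exact subset_union_left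
      · subst h
        rw [(key (n+1)).2.2.2]
        exact subset_union_right
  refine ⟨fun j => (g j).1, fun j => (key j).1.1, fun j => (key j).1.2.1, ?_, ?_, ?_, ?_⟩
  · intro j i hij x hx
    exact (key j).1.2.2.1 i hij (subset_closure hx)
  · intro j
    exact (key j).1.2.2.2.1
  · intro i j hij
    obtain ⟨m, rfl⟩ : ∃ m, j = m + 1 := ⟨j - 1, by omega⟩
    have h1 : closure ((g i).1) ⊆ Kpre (m+1) := by
      rw [hKs m]; exact mono m i (by omega)
    have h2 := (key (m+1)).1.2.2.2.2.1
    ext x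
    simp only [mem_inter_iff, mem_empty_iff_false, iff_false, not_and]
    intro hxi hxj
    have : x ∈ closure ((g (m+1)).1) ∩ Kpre (m+1) := ⟨hxj, h1 hxi⟩
    rw [h2] at this
    exact this
  · intro j k hk hkc
    exact (key j).1.2.2.2.2.2 k hk hkc



/-- Every hereditarily Lindelöf `Ḡ_δ`-subset `B` of a regular space `X` is `ω`-Urysohn:
every infinite subset `D ⊆ B` which is closed and discrete in `X` contains an infinite
strongly discrete (in `X`) subset `S`. -/
theorem stmt_9 {X : Type*} [TopologicalSpace X] [RegularSpace X] (B : Set X)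
    (hHL : ∀ S ⊆ B, ∀ 𝒰 : Set (Set X), (∀ U ∈ 𝒰, IsOpen U) → S ⊆ ⋃₀ 𝒰 →
      ∃ 𝒱 ⊆ 𝒰, 𝒱.Countable ∧ S ⊆ ⋃₀ 𝒱)
    (W : ℕ → Set X) (hWopen : ∀ n, IsOpen (W n))
    (hB1 : B = ⋂ n, W n) (hB2 : B = ⋂ n, closure (W n)) :
    ∀ D ⊆ B, D.Infinite → IsClosed D →
      (∀ x ∈ D, ∃ U : Set X, IsOpen U ∧ x ∈ U ∧ U ∩ D = {x}) →
      ∃ S ⊆ D, S.Infinite ∧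
        ∃ U : X → Set X, (∀ x ∈ S, IsOpen (U x) ∧ x ∈ U x) ∧
          ∀ z : X, ∃ V ∈ nhds z, {x | x ∈ S ∧ (V ∩ U x).Nonempty}.Subsingleton := by
  classical
  intro D hDB hDinf hDcl hDdisc
  -- countable injective sequence in D
  obtain ⟨e⟩ : Nonempty (ℕ ↪ D) := ⟨hDinf.natEmbedding D⟩
  set d : ℕ → X := fun n => (e n : X) with hd
  have hdD : ∀ j, d j ∈ D := fun j => (e j).2
  have hdinj : Function.Injective d := fun a b h => e.injective (Subtype.ext h)
  have hdB : ∀ j, d j ∈ B := fun j => hDB (hdD j)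
  have hdW : ∀ j i, d j ∈ W i := by
    intro j i
    have := hdB j
    rw [hB1] at this
    exact mem_iInter.1 this i
  -- countable cover of B by open sets whose closures meet D in ≤ 1 point
  have hcov : ∀ z ∈ B, ∃ Oz : Set X, IsOpen Oz ∧ z ∈ Oz ∧ (closure Oz ∩ D).Subsingleton := by
    intro z hz
    by_cases hzD : z ∈ D
    · obtain ⟨U₀, hU₀o, hzU₀, hU₀D⟩ := hDdisc z hzD
      obtain ⟨Oz, hOo, hzO, hOc⟩ : ∃ U : Set X, IsOpen U ∧ z ∈ U ∧ closure U ⊆ U₀ := by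
        obtain ⟨t, ht, htc, hts⟩ := exists_mem_nhds_isClosed_subset (hU₀o.mem_nhds hzU₀)
        exact ⟨interior t, isOpen_interior, mem_interior_iff_mem_nhds.2 ht,
          (closure_minimal interior_subset htc).trans hts⟩
      refine ⟨Oz, hOo, hzO, ?_⟩
      intro x hx y hy
      have hx' : x ∈ U₀ ∩ D := ⟨hOc hx.1, hx.2⟩
      have hy' : y ∈ U₀ ∩ D := ⟨hOc hy.1, hy.2⟩
      rw [hU₀D] at hx' hy'
      rw [hx', hy']
    · obtain ⟨Oz, hOo, hzO, hOc⟩ : ∃ U : Set X, IsOpen U ∧ z ∈ U ∧ closure U ⊆ Dᶜ := by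
        obtain ⟨t, ht, htc, hts⟩ :=
          exists_mem_nhds_isClosed_subset (hDcl.isOpen_compl.mem_nhds hzD)
        exact ⟨interior t, isOpen_interior, mem_interior_iff_mem_nhds.2 ht,
          (closure_minimal interior_subset htc).trans hts⟩
      refine ⟨Oz, hOo, hzO, ?_⟩
      intro x hx
      exact absurd hx.2 (hOc hx.1)
  set 𝒰 : Set (Set X) := {V | IsOpen V ∧ (closure V ∩ D).Subsingleton} with h𝒰
  obtain ⟨𝒱, h𝒱𝒰, h𝒱c, h𝒱cov⟩ := hHL B subset_rfl 𝒰 (fun U hU => hU.1)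
    (fun z hz => by
      obtain ⟨Oz, h1, h2, h3⟩ := hcov z hz
      exact ⟨Oz, ⟨h1, h3⟩, h2⟩)
  have h𝒱ne : 𝒱.Nonempty := by
    obtain ⟨x, hx⟩ := hDinf.nonempty
    obtain ⟨V, hV, _⟩ := h𝒱cov (hDB hx)
    exact ⟨V, hV⟩
  obtain ⟨O, hOrange⟩ := h𝒱c.exists_eq_range h𝒱ne
  have hOopen : ∀ k, IsOpen (O k) := fun k => (h𝒱𝒰 (hOrange ▸ mem_range_self k)).1
  have hOD : ∀ k, (closure (O k) ∩ D).Subsingleton :=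
    fun k => (h𝒱𝒰 (hOrange ▸ mem_range_self k)).2
  have hOcov : ∀ z ∈ B, ∃ k, z ∈ O k := by
    intro z hz
    obtain ⟨V, hV, hzV⟩ := h𝒱cov hz
    rw [hOrange] at hV
    obtain ⟨k, rfl⟩ := hV
    exact ⟨k, hzV⟩
  -- the good sequence
  obtain ⟨Us, hUso, hUsd, hUsW, hUsD, hUsdisj, hUsO⟩ := exists_good_seq W O D d hdD hdinj
    hdW (fun j => hDdisc (d j) (hdD j)) hWopen hOopen
  -- index function
  set Uf : X → Set X := fun x => if h : ∃ j, d j = x then Us h.choose else ∅ with hUf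
  have hUfd : ∀ j, Uf (d j) = Us j := by
    intro j
    have h : ∃ i, d i = d j := ⟨j, rfl⟩
    simp only [hUf, dif_pos h]
    rw [hdinj h.choose_spec]
  refine ⟨range d, range_subset_iff.2 hdD, infinite_range_of_injective hdinj, Uf, ?_, ?_⟩
  · rintro x ⟨j, rfl⟩
    rw [hUfd j]
    exact ⟨hUso j, hUsd j⟩
  -- discreteness
  intro z
  -- key: find V with at most one j s.t. V meets Us j
  have key : ∃ V ∈ nhds z, {j : ℕ | (V ∩ Us j).Nonempty}.Subsingleton := by
    have build : ∀ (V₀ : Set X) (A : Set ℕ), IsOpen V₀ → z ∈ V₀ → A.Finite →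
        (∀ j ∉ A, V₀ ∩ Us j = ∅) →
        ∃ V ∈ nhds z, {j : ℕ | (V ∩ Us j).Nonempty}.Subsingleton := by
      intro V₀ A hV₀o hzV₀ hAfin hA
      set A' : Set ℕ := {j ∈ A | z ∉ closure (Us j)} with hA'
      have hA'fin : A'.Finite := hAfin.subset (fun j hj => hj.1)
      set C : Set X := ⋃ j ∈ A', closure (Us j) with hC
      have hCcl : IsClosed C := hA'fin.isClosed_biUnion (fun j _ => isClosed_closure)
      have hzC : z ∉ C := by
        simp only [hC, mem_iUnion, not_exists]
        rintro j ⟨hjA, hjc⟩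
        exact fun h => hjc h
      refine ⟨V₀ ∩ Cᶜ, (hV₀o.inter hCcl.isOpen_compl).mem_nhds ⟨hzV₀, hzC⟩, ?_⟩
      have claim : ∀ j, ((V₀ ∩ Cᶜ) ∩ Us j).Nonempty → j ∈ A ∧ z ∈ closure (Us j) := by
        intro j ⟨x, hx⟩
        have hjA : j ∈ A := by
          by_contra h
          have := hA j h
          have : x ∈ V₀ ∩ Us j := ⟨hx.1.1, hx.2⟩
          rw [hA j h] at this
          exact this
        refine ⟨hjA, ?_⟩
        by_contra h
        have hjA' : j ∈ A' := ⟨hjA, h⟩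
        have : x ∈ C := mem_biUnion hjA' (subset_closure hx.2)
        exact hx.1.2 this
      intro j hj j' hj'
      obtain ⟨hjA, hjc⟩ := claim j hj
      obtain ⟨hj'A, hj'c⟩ := claim j' hj'
      by_contra hne
      rcases lt_or_gt_of_ne hne with h | h
      · have := hUsdisj j j' h
        have : z ∈ closure (Us j) ∩ closure (Us j') := ⟨hjc, hj'c⟩
        rw [hUsdisj j j' h] at this
        exact this
      · have : z ∈ closure (Us j') ∩ closure (Us j) := ⟨hj'c, hjc⟩
        rw [hUsdisj j' j h] at this
        exact this
    by_cases hzB : z ∈ B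
    · obtain ⟨k, hzk⟩ := hOcov z hzB
      set A : Set ℕ := Iic k ∪ {j | d j ∈ closure (O k)} with hA
      have hAfin : A.Finite := by
        refine (finite_Iic k).union ?_
        have : {j : ℕ | d j ∈ closure (O k)}.Subsingleton := by
          intro i hi i' hi'
          have h1 : d i ∈ closure (O k) ∩ D := ⟨hi, hdD i⟩
          have h2 : d i' ∈ closure (O k) ∩ D := ⟨hi', hdD i'⟩
          exact hdinj (hOD k h1 h2)
        exact this.finite
      refine build (O k) A (hOopen k) hzk hAfin ?_
      intro j hj
      simp only [hA, mem_union, mem_Iic, mem_setOf_eq, not_or, not_le] at hj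
      rw [inter_comm]
      exact hUsO j k hj.1 hj.2
    · have : z ∉ ⋂ n, closure (W n) := by rw [← hB2]; exact hzB
      obtain ⟨m, hm⟩ : ∃ m, z ∉ closure (W m) := by
        simpa only [mem_iInter, not_forall] using this
      refine build (closure (W m))ᶜ (Iio m) isClosed_closure.isOpen_compl hm
        (finite_Iio m) ?_
      intro j hj
      have hmj : m ≤ j := by simpa using hj
      ext x
      simp only [mem_inter_iff, mem_compl_iff, mem_empty_iff_false, iff_false, not_and]
      intro hxc hxU
      exact hxc (subset_closure (hUsW j m hmj hxU))
  obtain ⟨V, hV, hVsub⟩ := key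
  refine ⟨V, hV, ?_⟩
  rintro x ⟨⟨j, rfl⟩, hx⟩ y ⟨⟨j', rfl⟩, hy⟩
  rw [hUfd] at hx hy
  exact congrArg d (hVsub hx hy)
end

section
/- A regular topological space X whose set X' of non-isolated points is Lindelöf is paracompact. -/
open Set Filter Function

/-- In a regular space, inside any open neighborhood of a point there is an open
neighborhood whose closure is contained in it. -/
lemma aux_regular_shrink {X : Type*} [TopologicalSpace X] [RegularSpace X]
    {x : X} {U : Set X} (hU : IsOpen U) (hx : x ∈ U) :
    ∃ V : Set X, IsOpen V ∧ x ∈ V ∧ closure V ⊆ U := by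
  obtain ⟨t, ht, htc, hts⟩ := exists_mem_nhds_isClosed_subset (hU.mem_nhds hx)
  exact ⟨interior t, isOpen_interior, mem_interior_iff_mem_nhds.2 ht,
    (closure_mono interior_subset).trans (htc.closure_subset.trans hts)⟩

/-- A regular topological space whose set of non-isolated points is Lindelöf
is paracompact. -/
theorem stmt_10 {X : Type*} [TopologicalSpace X] [RegularSpace X]
    (hL : ∀ 𝒰 : Set (Set X), (∀ U ∈ 𝒰, IsOpen U) →
      {x : X | ¬ IsOpen ({x} : Set X)} ⊆ ⋃₀ 𝒰 →
      ∃ 𝒱 ⊆ 𝒰, 𝒱.Countable ∧ {x : X | ¬ IsOpen ({x} : Set X)} ⊆ ⋃₀ 𝒱) :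
    ParacompactSpace X := by
  classical
  constructor
  intro α s ho hcov
  rcases isEmpty_or_nonempty X with hX | hX
  · exact ⟨α, s, ho, hcov, fun x => (IsEmpty.false x).elim, fun b => ⟨b, subset_rfl⟩⟩
  -- choose cover members and shrinkings for each point
  have hmem : ∀ x : X, ∃ a, x ∈ s a := by
    intro x
    have : x ∈ ⋃ a, s a := hcov ▸ mem_univ x
    exact mem_iUnion.1 this
  choose a ha using hmem
  have hG : ∀ x : X, ∃ G : Set X, IsOpen G ∧ x ∈ G ∧ closure G ⊆ s (a x) :=
    fun x => aux_regular_shrink (ho (a x)) (ha x)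
  choose G hGo hGx hGs using hG
  have hH : ∀ x : X, ∃ H : Set X, IsOpen H ∧ x ∈ H ∧ closure H ⊆ G x :=
    fun x => aux_regular_shrink (hGo x) (hGx x)
  choose H hHo hHx hHG using hH
  -- apply the Lindelöf hypothesis to the family of all H x
  obtain ⟨𝒱, h𝒱sub, h𝒱cnt, h𝒱cov⟩ := hL (range H)
    (by rintro U ⟨x, rfl⟩; exact hHo x)
    (fun x _ => ⟨H x, mem_range_self x, hHx x⟩)
  -- pick for each member of 𝒱 a point whose H is that member
  have hpick : ∀ V ∈ 𝒱, ∃ x : X, H x = V := fun V hV => h𝒱sub hV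
  choose! p hp using hpick
  obtain ⟨x₀⟩ := hX
  -- enumerate the countable set of chosen points
  have hScnt : (insert x₀ (p '' 𝒱) : Set X).Countable :=
    (h𝒱cnt.image p).insert x₀
  obtain ⟨f, hf⟩ :=
    hScnt.exists_eq_range (insert_nonempty _ _)
  -- key covering fact: the non-isolated points are covered by ⋃ n, H (f n)
  have hcovH : {x : X | ¬ IsOpen ({x} : Set X)} ⊆ ⋃ n, H (f n) := by
    intro x hx
    obtain ⟨V, hV, hxV⟩ := h𝒱cov hx
    have hpV : p V ∈ (insert x₀ (p '' 𝒱) : Set X) := mem_insert_of_mem _ ⟨V, hV, rfl⟩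
    rw [hf] at hpV
    obtain ⟨n, hn⟩ := hpV
    refine mem_iUnion.2 ⟨n, ?_⟩
    rw [hn, hp V hV]
    exact hxV
  set D : Set X := (⋃ n, H (f n))ᶜ with hD
  have hDiso : ∀ x ∈ D, IsOpen ({x} : Set X) := by
    intro x hx
    by_contra h
    exact hx (hcovH h)
  -- the locally finite refinement
  set W : ℕ → Set X := fun n =>
    (G (f n) \ ⋃ m ∈ Finset.range n, closure (H (f m))) ∩ (⋃ k, H (f k)) with hW
  have hWo : ∀ n, IsOpen (W n) := by
    intro n
    refine (((hGo (f n)).sdiff ?_).inter (isOpen_iUnion fun k => hHo (f k)))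
    exact isClosed_biUnion_finset fun m _ => isClosed_closure
  refine ⟨ULift ℕ ⊕ X, fun b => Sum.elim (fun n => W n.down)
    (fun x => if x ∈ D then {x} else ∅) b, ?_, ?_, ?_, ?_⟩
  · rintro (⟨⟨n⟩⟩ | x)
    · exact hWo n
    · dsimp only [Sum.elim_inr]
      split_ifs with hx
      · exact hDiso x hx
      · exact isOpen_empty
  · -- covering
    apply eq_univ_of_forall
    intro x
    by_cases hx : x ∈ D
    · refine mem_iUnion.2 ⟨Sum.inr x, ?_⟩
      simp [hx]
    · have hxU : x ∈ ⋃ k, H (f k) := not_not.1 hx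
      have hxc : ∃ n, x ∈ closure (H (f n)) := by
        obtain ⟨n, hn⟩ := mem_iUnion.1 hxU
        exact ⟨n, subset_closure hn⟩
      refine mem_iUnion.2 ⟨Sum.inl ⟨Nat.find hxc⟩, ?_, hxU⟩
      refine ⟨hHG (f _) (Nat.find_spec hxc), ?_⟩
      intro hmem
      simp only [Finset.mem_range, mem_iUnion, exists_prop] at hmem
      obtain ⟨m, hmn, hmc⟩ := hmem
      exact Nat.find_min hxc hmn hmc
  · -- local finiteness
    intro x
    by_cases hx : x ∈ D
    · refine ⟨{x}, (hDiso x hx).mem_nhds rfl, ?_⟩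
      refine Set.Finite.subset (finite_singleton (Sum.inr x)) ?_
      rintro (⟨⟨n⟩⟩ | y) ⟨z, hz1, hz2⟩
      · rcases mem_singleton_iff.1 hz2 with rfl
        exact absurd hz1.2 hx
      · dsimp only [Sum.elim_inr] at hz1
        split_ifs at hz1 with hy
        · rcases mem_singleton_iff.1 hz1 with rfl
          rcases mem_singleton_iff.1 hz2 with rfl
          rfl
        · exact hz1.elim
    · have hxU : x ∈ ⋃ k, H (f k) := not_not.1 hx
      obtain ⟨n, hn⟩ := mem_iUnion.1 hxU
      refine ⟨H (f n), (hHo (f n)).mem_nhds hn, ?_⟩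
      refine Set.Finite.subset
        ((Set.finite_Iic n).image (fun m => (Sum.inl ⟨m⟩ : ULift ℕ ⊕ X))) ?_
      rintro (⟨⟨m⟩⟩ | y) ⟨z, hz1, hz2⟩
      · refine ⟨m, ?_, rfl⟩
        by_contra hmn
        have hmn' : n < m := not_le.1 (fun h => hmn h)
        have : z ∈ ⋃ l ∈ Finset.range m, closure (H (f l)) := by
          simp only [Finset.mem_range, mem_iUnion, exists_prop]
          exact ⟨n, hmn', subset_closure hz2⟩
        exact hz1.1.2 this
      · dsimp only [Sum.elim_inr] at hz1
        split_ifs at hz1 with hy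
        · rcases mem_singleton_iff.1 hz1 with rfl
          exact absurd (mem_iUnion.2 ⟨n, hz2⟩ : z ∈ ⋃ k, H (f k)) hy
        · exact hz1.elim
  · rintro (⟨⟨n⟩⟩ | x)
    · exact ⟨a (f n), fun y hy =>
        hGs (f n) (subset_closure hy.1.1)⟩
    · refine ⟨a x, ?_⟩
      dsimp only [Sum.elim_inr]
      split_ifs with hx
      · exact fun y hy => by rw [mem_singleton_iff.1 hy]; exact ha x
      · exact empty_subset _
end

section
/- Let X be a regular R₀-space. For each finite open cover 𝒰 of X let B_𝒰 = ⋃_{U∈𝒰} U × U. Then the family {B_𝒰 : 𝒰 a finite open cover of X} is a symmetric entourage base for X which is locally uniform: for every x ∈ X and neighborhood O of x there is a finite open cover 𝒰 with B_𝒰 B_𝒰⁻¹ B_𝒰[x] ⊆ O. -/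
/-- The entourages `B_𝒰 = ⋃_{U ∈ 𝒰} U × U` associated to finite open covers `𝒰` of `X`. -/
def coverEnt (X : Type*) [TopologicalSpace X] : Set (Set (X × X)) :=
  {B | ∃ 𝒰 : Set (Set X), 𝒰.Finite ∧ (∀ U ∈ 𝒰, IsOpen U) ∧ ⋃₀ 𝒰 = Set.univ ∧
    B = ⋃ U ∈ 𝒰, U ×ˢ U}

/-!
Each `B_𝒰` is reflexive and symmetric, and `B_𝒰 ∩ B_𝒱 = B_𝒲` for the common refinement `𝒲`
of `𝒰` and `𝒱`. Regularity gives, for `O ∈ 𝓝 x`, a closed `C ∈ 𝓝 x` inside `interior O`;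
for the two-set cover `{interior O, Cᶜ}` every point of `C` has its ball inside `O`, so one
entourage works uniformly on the neighbourhood `C`. Doing this along a chain
`N₁ ⊆ N₂ ⊆ N₃ ⊆ O` of neighbourhoods and intersecting the three entourages controls each
of the three steps of `B B⁻¹ B`.
-/

open Set Filter Topology UniformSpace SetRel

section coverRel

variable {X : Type*} {𝒰 𝒱 : Set (Set X)}

def coverRel (𝒰 : Set (Set X)) : SetRel X X := ⋃ U ∈ 𝒰, U ×ˢ U

@[simp]
lemma mem_coverRel {a b : X} : (a, b) ∈ coverRel 𝒰 ↔ ∃ U ∈ 𝒰, a ∈ U ∧ b ∈ U := by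
  simp only [coverRel, mem_iUnion, mem_prod, exists_prop]

lemma id_subset_coverRel (h𝒰 : ⋃₀ 𝒰 = univ) : SetRel.id ⊆ coverRel 𝒰 := by
  rintro ⟨a, _⟩ rfl
  obtain ⟨U, hU, ha⟩ : a ∈ ⋃₀ 𝒰 := h𝒰 ▸ mem_univ a
  exact mem_coverRel.2 ⟨U, hU, ha, ha⟩

lemma preimage_swap_coverRel : Prod.swap ⁻¹' coverRel 𝒰 = coverRel 𝒰 := by
  ext ⟨a, b⟩
  change (b, a) ∈ coverRel 𝒰 ↔ (a, b) ∈ coverRel 𝒰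
  simp only [mem_coverRel, and_comm]

lemma coverRel_image2_inter : coverRel (image2 (· ∩ ·) 𝒰 𝒱) = coverRel 𝒰 ∩ coverRel 𝒱 := by
  ext ⟨a, b⟩
  simp only [mem_coverRel, mem_image2, mem_inter_iff]
  constructor
  · rintro ⟨_, ⟨U, hU, V, hV, rfl⟩, ⟨haU, haV⟩, hbU, hbV⟩
    exact ⟨⟨U, hU, haU, hbU⟩, V, hV, haV, hbV⟩
  · rintro ⟨⟨U, hU, haU, hbU⟩, V, hV, haV, hbV⟩
    exact ⟨U ∩ V, ⟨U, hU, V, hV, rfl⟩, ⟨haU, haV⟩, hbU, hbV⟩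

lemma ball_coverRel_pair_subset {W C : Set X} {x : X} (hx : x ∈ C) :
    ball x (coverRel {W, Cᶜ}) ⊆ W := by
  rintro y hy
  obtain ⟨U, rfl | rfl, hxU, hyU⟩ := mem_coverRel.1 hy
  · exact hyU
  · exact absurd hx hxU

lemma ball_coverRel_mem_nhds [TopologicalSpace X] (h𝒰 : ∀ U ∈ 𝒰, IsOpen U) {x : X}
    (hx : x ∈ ⋃₀ 𝒰) : ball x (coverRel 𝒰) ∈ 𝓝 x := by
  obtain ⟨U, hU, hxU⟩ := hx
  exact mem_of_superset ((h𝒰 U hU).mem_nhds hxU) fun y hy ↦ mem_coverRel.2 ⟨U, hU, hxU, hy⟩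

end coverRel

section coverEnt

variable {X : Type*} [TopologicalSpace X] {B B₁ B₂ : SetRel X X}

lemma coverRel_mem_coverEnt {𝒰 : Set (Set X)} (hfin : 𝒰.Finite) (hopen : ∀ U ∈ 𝒰, IsOpen U)
    (hcov : ⋃₀ 𝒰 = univ) : coverRel 𝒰 ∈ coverEnt X :=
  ⟨𝒰, hfin, hopen, hcov, rfl⟩

lemma id_subset_of_mem_coverEnt (hB : B ∈ coverEnt X) : SetRel.id ⊆ B := by
  obtain ⟨𝒰, -, -, hcov, rfl⟩ := hB
  exact id_subset_coverRel hcov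

lemma preimage_swap_of_mem_coverEnt (hB : B ∈ coverEnt X) : Prod.swap ⁻¹' B = B := by
  obtain ⟨𝒰, -, -, -, rfl⟩ := hB
  exact preimage_swap_coverRel

lemma inter_mem_coverEnt (h₁ : B₁ ∈ coverEnt X) (h₂ : B₂ ∈ coverEnt X) :
    B₁ ∩ B₂ ∈ coverEnt X := by
  obtain ⟨𝒰, h𝒰f, h𝒰o, h𝒰c, rfl⟩ := h₁
  obtain ⟨𝒱, h𝒱f, h𝒱o, h𝒱c, rfl⟩ := h₂
  change coverRel 𝒰 ∩ coverRel 𝒱 ∈ coverEnt X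
  rw [← coverRel_image2_inter]
  refine coverRel_mem_coverEnt (h𝒰f.image2 _ h𝒱f) ?_ ?_
  · rintro _ ⟨U, hU, V, hV, rfl⟩
    exact (h𝒰o U hU).inter (h𝒱o V hV)
  · refine eq_univ_of_forall fun a ↦ ?_
    obtain ⟨U, hU, haU⟩ : a ∈ ⋃₀ 𝒰 := h𝒰c ▸ mem_univ a
    obtain ⟨V, hV, haV⟩ : a ∈ ⋃₀ 𝒱 := h𝒱c ▸ mem_univ a
    exact ⟨U ∩ V, mem_image2_of_mem hU hV, haU, haV⟩

lemma ball_mem_nhds_of_mem_coverEnt (hB : B ∈ coverEnt X) (x : X) : ball x B ∈ 𝓝 x := by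
  obtain ⟨𝒰, -, hopen, hcov, rfl⟩ := hB
  exact ball_coverRel_mem_nhds hopen (hcov ▸ mem_univ x)

variable [RegularSpace X]

lemma exists_coverEnt_ball_subset_of_mem_nhds {x : X} {O : Set X} (hO : O ∈ 𝓝 x) :
    ∃ N ∈ 𝓝 x, ∃ B ∈ coverEnt X, ∀ y ∈ N, ball y B ⊆ O := by
  obtain ⟨C, hCx, hC, hCO⟩ := exists_mem_nhds_isClosed_subset (interior_mem_nhds.2 hO)
  refine ⟨C, hCx, coverRel {interior O, Cᶜ}, coverRel_mem_coverEnt (toFinite _) ?_ ?_,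
    fun y hy ↦ (ball_coverRel_pair_subset hy).trans interior_subset⟩
  · rintro U (rfl | rfl)
    exacts [isOpen_interior, hC.isOpen_compl]
  · refine eq_univ_of_forall fun a ↦ ?_
    by_cases ha : a ∈ C
    exacts [⟨_, .inl rfl, hCO ha⟩, ⟨_, .inr rfl, ha⟩]

lemma exists_coverEnt_ball_comp_inv_comp_subset {x : X} {O : Set X} (hO : O ∈ 𝓝 x) :
    ∃ B ∈ coverEnt X, ball x (B ○ (Prod.swap ⁻¹' B ○ B)) ⊆ O := by
  obtain ⟨N₃, hN₃, B₃, hB₃, h₃⟩ := exists_coverEnt_ball_subset_of_mem_nhds hO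
  obtain ⟨N₂, hN₂, B₂, hB₂, h₂⟩ := exists_coverEnt_ball_subset_of_mem_nhds hN₃
  obtain ⟨N₁, hN₁, B₁, hB₁, h₁⟩ := exists_coverEnt_ball_subset_of_mem_nhds hN₂
  have hB := inter_mem_coverEnt (inter_mem_coverEnt hB₁ hB₂) hB₃
  refine ⟨_, hB, ?_⟩
  rw [preimage_swap_of_mem_coverEnt hB]
  rintro w ⟨y, hxy, z, hyz, hzw⟩
  have hy : y ∈ N₂ := h₁ x (mem_of_mem_nhds hN₁) hxy.1.1
  have hz : z ∈ N₃ := h₂ y hy hyz.1.2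
  exact h₃ z hz hzw.2

end coverEnt

open UniformSpace in
theorem stmt_14_general {X : Type*} [TopologicalSpace X] [RegularSpace X] :
    (∀ B ∈ coverEnt X, SetRel.id ⊆ B ∧ Prod.swap ⁻¹' B = B) ∧
    (∀ B₁ ∈ coverEnt X, ∀ B₂ ∈ coverEnt X, ∃ B₃ ∈ coverEnt X, B₃ ⊆ B₁ ∩ B₂) ∧
    (∀ x : X, (∀ B ∈ coverEnt X, ball x B ∈ nhds x) ∧
      ∀ O ∈ nhds x, ∃ B ∈ coverEnt X, ball x B ⊆ O) ∧
    (∀ x : X, ∀ O ∈ nhds x, ∃ B ∈ coverEnt X,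
      ball x (SetRel.comp B (SetRel.comp (Prod.swap ⁻¹' B) B)) ⊆ O) := by
  refine ⟨fun B hB ↦ ⟨id_subset_of_mem_coverEnt hB, preimage_swap_of_mem_coverEnt hB⟩,
    fun B₁ h₁ B₂ h₂ ↦ ⟨_, inter_mem_coverEnt h₁ h₂, subset_rfl⟩,
    fun x ↦ ⟨fun B hB ↦ ball_mem_nhds_of_mem_coverEnt hB x, fun O hO ↦ ?_⟩,
    fun x O hO ↦ exists_coverEnt_ball_comp_inv_comp_subset hO⟩
  obtain ⟨N, hN, B, hB, hBO⟩ := exists_coverEnt_ball_subset_of_mem_nhds hO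
  exact ⟨B, hB, hBO x (mem_of_mem_nhds hN)⟩

open UniformSpace in
/-- For a regular `R₀`-space `X`, the family of entourages `B_𝒰` indexed by finite open
covers `𝒰` of `X` is a symmetric entourage base for `X` which is locally uniform. -/
theorem stmt_14 {X : Type*} [TopologicalSpace X] [RegularSpace X]
    (hR0 : ∀ x : X, ∀ O ∈ nhds x, closure {x} ⊆ O) :
    (∀ B ∈ coverEnt X, SetRel.id ⊆ B ∧ Prod.swap ⁻¹' B = B) ∧
    (∀ B₁ ∈ coverEnt X, ∀ B₂ ∈ coverEnt X, ∃ B₃ ∈ coverEnt X, B₃ ⊆ B₁ ∩ B₂) ∧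
    (∀ x : X, (∀ B ∈ coverEnt X, ball x B ∈ nhds x) ∧
      ∀ O ∈ nhds x, ∃ B ∈ coverEnt X, ball x B ⊆ O) ∧
    (∀ x : X, ∀ O ∈ nhds x, ∃ B ∈ coverEnt X,
      ball x (SetRel.comp B (SetRel.comp (Prod.swap ⁻¹' B) B)) ⊆ O) :=
  stmt_14_general
end

section
/- Let X be a compact Hausdorff space whose topology is generated by a topological preuniformity 𝒰 (a filter of entourages such that the balls U[x], U ∈ 𝒰, form a neighborhood base at every point). Then 𝒰 is locally uniform if and only if it is locally quasi-uniform. -/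
/-!
Local uniformity implies local quasi-uniformity because `UU ⊆ UU⁻¹U` for reflexive `U`.
Conversely, fix `x` and consider the filter generated by the sets `U⁻¹U[x]`. It has no cluster
point `c ≠ x`: choose `U` with `UU[c]` and `U[x]` inside disjoint neighbourhoods of `c` and `x`;
a point `z ∈ U[c] ∩ U⁻¹U[x]` is witnessed by some `y ∈ U[x]` with `(z, y) ∈ U`, so `y ∈ UU[c]`
as well. By compactness the filter converges to `x`. Hence for `V` with `VV[x] ⊆ O` there is
`U ⊆ V` with `U⁻¹U[x] ⊆ V[x]`, and then `UU⁻¹U[x] ⊆ VV[x] ⊆ O`.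
-/

open UniformSpace SetRel Filter Topology

namespace Preuniformity

variable {X : Type*}

lemma comp_subset_comp_inv_comp {U : SetRel X X} (hU : .id ⊆ U) :
    U ○ U ⊆ U ○ (SetRel.inv U ○ U) := by
  have : (.id : SetRel X X) ⊆ SetRel.inv U := inv_id (α := X) ▸ inv_mono hU
  calc U ○ U = U ○ (.id ○ U) := by rw [id_comp]
    _ ⊆ U ○ (SetRel.inv U ○ U) := by gcongr

/-- In the paper's notation, `ball x (U ○ SetRel.inv U)` is `U⁻¹U[x]`. -/
def compInvBalls (F : Filter (X × X)) (x : X) : Filter X :=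
  F.lift' fun U ↦ ball x (U ○ SetRel.inv U)

lemma mem_compInvBalls {F : Filter (X × X)} {x : X} {s : Set X} :
    s ∈ compInvBalls F x ↔ ∃ U ∈ F, ball x (U ○ SetRel.inv U) ⊆ s :=
  mem_lift'_sets fun _ _ h ↦ ball_mono (comp_subset_comp h (inv_mono h)) x

variable [TopologicalSpace X]

def IsTopological (F : Filter (X × X)) : Prop :=
  ∀ x : X, (𝓝 x).HasBasis (· ∈ F) (ball x ·)

def IsLocallyQuasiUniform (F : Filter (X × X)) : Prop :=
  ∀ x : X, ∀ O ∈ 𝓝 x, ∃ U ∈ F, ball x (U ○ U) ⊆ O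

def IsLocallyUniform (F : Filter (X × X)) : Prop :=
  ∀ x : X, ∀ O ∈ 𝓝 x, ∃ U ∈ F, ball x (U ○ (SetRel.inv U ○ U)) ⊆ O

lemma isTopological_of_forall {F : Filter (X × X)}
    (h : ∀ x : X, (∀ U ∈ F, ball x U ∈ 𝓝 x) ∧ ∀ O ∈ 𝓝 x, ∃ U ∈ F, ball x U ⊆ O) :
    IsTopological F :=
  fun x ↦ ⟨fun O ↦ ⟨(h x).2 O, fun ⟨U, hU, hUO⟩ ↦ mem_of_superset ((h x).1 U hU) hUO⟩⟩

lemma IsLocallyUniform.isLocallyQuasiUniform {F : Filter (X × X)}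
    (hrefl : ∀ U ∈ F, SetRel.id ⊆ U) (h : IsLocallyUniform F) : IsLocallyQuasiUniform F := by
  intro x O hO
  obtain ⟨U, hU, hUO⟩ := h x O hO
  exact ⟨U, hU, (ball_mono (comp_subset_comp_inv_comp (hrefl U hU)) x).trans hUO⟩

lemma IsLocallyQuasiUniform.eq_of_clusterPt_compInvBalls [T2Space X] {F : Filter (X × X)}
    (htop : IsTopological F) (h : IsLocallyQuasiUniform F) {x c : X}
    (hc : ClusterPt c (compInvBalls F x)) : c = x := by
  by_contra hne
  obtain ⟨u, v, hu, hv, hxu, hcv, huv⟩ := t2_separation (Ne.symm hne)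
  obtain ⟨V, hV, hVv⟩ := h c v (hv.mem_nhds hcv)
  obtain ⟨W, hW, hWu⟩ := (htop x).mem_iff.1 (hu.mem_nhds hxu)
  have hVW : V ∩ W ∈ F := inter_mem hV hW
  obtain ⟨z, hcz, y, hxy, hzy⟩ := clusterPt_iff_nonempty.1 hc ((htop c).mem_of_mem hVW)
    (mem_compInvBalls.2 ⟨V ∩ W, hVW, le_rfl⟩)
  have hyv : y ∈ v := hVv ⟨z, hcz.1, hzy.1⟩
  have hyu : y ∈ u := hWu hxy.2
  exact Set.disjoint_left.1 huv hyu hyv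

lemma IsLocallyQuasiUniform.compInvBalls_le_nhds [CompactSpace X] [T2Space X]
    {F : Filter (X × X)} (htop : IsTopological F) (h : IsLocallyQuasiUniform F) (x : X) :
    compInvBalls F x ≤ 𝓝 x :=
  le_nhds_of_unique_clusterPt fun _ hc ↦ h.eq_of_clusterPt_compInvBalls htop hc

lemma IsLocallyQuasiUniform.isLocallyUniform [CompactSpace X] [T2Space X] {F : Filter (X × X)}
    (htop : IsTopological F) (h : IsLocallyQuasiUniform F) : IsLocallyUniform F := by
  intro x O hO
  obtain ⟨V, hV, hVO⟩ := h x O hO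
  obtain ⟨W, hW, hWV⟩ :=
    mem_compInvBalls.1 (h.compInvBalls_le_nhds htop x ((htop x).mem_of_mem hV))
  refine ⟨V ∩ W, inter_mem hV hW, ?_⟩
  rintro w ⟨y, hxy, z, hzy, hzw⟩
  have hz : z ∈ ball x V := hWV ⟨y, hxy.2, hzy.2⟩
  exact hVO ⟨z, hz, hzw.1⟩

end Preuniformity

open Preuniformity

open UniformSpace in
/-- For a topological preuniformity (a filter `F` of entourages whose balls form
neighborhood bases) generating a compact Hausdorff topology, being locally uniform is
equivalent to being locally quasi-uniform. -/
theorem stmt_15 {X : Type*} [TopologicalSpace X] [CompactSpace X] [T2Space X]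
    (F : Filter (X × X)) (hrefl : ∀ U ∈ F, SetRel.id ⊆ U)
    (htop : ∀ x : X, (∀ U ∈ F, ball x U ∈ nhds x) ∧
      ∀ O ∈ nhds x, ∃ U ∈ F, ball x U ⊆ O) :
    ((∀ x : X, ∀ O ∈ nhds x, ∃ U ∈ F,
        ball x (SetRel.comp U (SetRel.comp (Prod.swap ⁻¹' U) U)) ⊆ O) ↔
      (∀ x : X, ∀ O ∈ nhds x, ∃ U ∈ F, ball x (SetRel.comp U U) ⊆ O)) :=
  ⟨IsLocallyUniform.isLocallyQuasiUniform (F := F) hrefl,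
    IsLocallyQuasiUniform.isLocallyUniform (isTopological_of_forall htop)⟩
end

section
/- If topological spaces X_n, n ∈ ω, each have an ω^ω-base, then their Tychonoff product ∏_{n∈ω} X_n has an ω^ω-base. -/
universe u

/-- A topological space `X` has a `P`-base if at every point there is a neighborhood base
indexed by `P`, monotone with respect to reverse inclusion. -/
def HasPBase (P : Type*) [Preorder P] (X : Type*) [TopologicalSpace X] : Prop :=
  ∀ x : X, ∃ U : P → Set X, (∀ α, U α ∈ nhds x) ∧
    (∀ ⦃α β : P⦄, α ≤ β → U β ⊆ U α) ∧ ∀ O ∈ nhds x, ∃ α, U α ⊆ O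

/-- If each space `X n`, `n ∈ ω`, has an `ω^ω`-base, then the Tychonoff product
`∏ n, X n` has an `ω^ω`-base. -/
theorem stmt_17 (X : ℕ → Type u) [∀ n, TopologicalSpace (X n)]
    (h : ∀ n, HasPBase (ℕ → ℕ) (X n)) :
    HasPBase (ℕ → ℕ) (∀ n, X n) := by
  intro x
  choose U hmem hmono hcof using fun n => h n (x n)
  set dec : ℕ → (ℕ → ℕ) → (ℕ → ℕ) := fun n α k => α (Nat.pair n k + 1) with hdec
  refine ⟨fun α => ⋂ n ∈ Finset.range (α 0), (fun f => f n) ⁻¹' U n (dec n α), ?_, ?_, ?_⟩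
  · intro α
    refine (Filter.biInter_finset_mem _).mpr fun n _ => ?_
    exact (continuous_apply n).continuousAt.preimage_mem_nhds (hmem n _)
  · intro α β hab f hf
    simp only [Set.mem_iInter, Finset.mem_range] at hf ⊢
    intro n hn
    exact hmono n (fun k => hab _) (hf n (lt_of_lt_of_le hn (hab 0)))
  · intro O hO
    rw [nhds_pi, Filter.mem_pi] at hO
    obtain ⟨I, hIfin, V, hV, hVO⟩ := hO
    choose β hβ using fun n => hcof n (V n) (hV n)
    obtain ⟨m, hm⟩ := hIfin.bddAbove
    set α : ℕ → ℕ := fun j =>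
      if j = 0 then m + 1 else β (Nat.unpair (j - 1)).1 (Nat.unpair (j - 1)).2 with hα
    refine ⟨α, fun f hf => hVO ?_⟩
    simp only [Set.mem_iInter, Finset.mem_range] at hf
    intro i hi
    have hi' : i < α 0 := by simp [hα, Nat.lt_succ_of_le (hm hi)]
    have hd : dec i α = β i := by
      funext k
      simp [hdec, hα, Nat.unpair_pair]
    have := hf i hi'
    rw [hd] at this
    exact hβ i this
end

section
/- Let X be a Hausdorff topological space admitting a family 𝓔 of entourages of cardinality κ ≥ ω, closed under finite unions, such that for every x ∈ X and every set C ⊆ X accumulating at x and for every entourage B in some fixed entourage base 𝓑 for X, there exists E ∈ 𝓔 with E ⊆ B and E[x] ∩ C infinite and E[x] contained in any prescribed neighborhood of x (i.e., (𝓔, 𝓑) is an 𝖺𝗌*-netbase for X). Then for every subset A ⊆ X the closure of A has cardinality at most 2^{|A|·κ}. -/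
/-!
A point `x` of the closure of `A` either lies in `A` or is an accumulation point of `A`. In a
Hausdorff space an accumulation point `x` is determined by the trace `E ↦ E[x] ∩ A` on `𝓔`: if
`y ≠ x`, separate them by open sets `Ox`, `Oy`, pick `B ∈ 𝓑` with `B[y] ⊆ Oy`, and use the
netbase property to find `E ⊆ B` in `𝓔` with `E[x] ⊆ Ox` meeting `A`; a point of `E[x] ∩ A`
cannot lie in `E[y] ⊆ Oy`. So there are at most `(2 ^ |A|) ^ κ` accumulation points.
-/

universe u

open UniformSpace Cardinal Topology Filter

variable {X : Type u} [TopologicalSpace X]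

def IsAsStarNetbase (𝓔 𝓑 : Set (Set (X × X))) : Prop :=
  ∀ B ∈ 𝓑, ∀ x : X, ∀ O ∈ 𝓝 x, ∀ C : Set X, (∀ V ∈ 𝓝 x, (V ∩ C).Infinite) →
    ∃ E ∈ 𝓔, E ⊆ B ∧ x ∈ ball x E ∧ ball x E ⊆ O ∧ (ball x E ∩ C).Infinite

theorem AccPt.inter_of_mem_nhds {x : X} {C V : Set X} (h : AccPt x (𝓟 C)) (hV : V ∈ 𝓝 x) :
    AccPt x (𝓟 (V ∩ C)) := by
  rw [accPt_iff_nhds] at h ⊢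
  intro U hU
  obtain ⟨y, ⟨⟨hyU, hyV⟩, hyC⟩, hyx⟩ := h (U ∩ V) (inter_mem hU hV)
  exact ⟨y, ⟨hyU, hyV, hyC⟩, hyx⟩

theorem AccPt.infinite_inter_of_mem_nhds [T1Space X] {x : X} {C V : Set X}
    (h : AccPt x (𝓟 C)) (hV : V ∈ 𝓝 x) : (V ∩ C).Infinite :=
  Set.Infinite.of_accPt (h.inter_of_mem_nhds hV)

theorem IsAsStarNetbase.injOn_derivedSet [T2Space X] {𝓔 𝓑 : Set (Set (X × X))}
    (hnet : IsAsStarNetbase 𝓔 𝓑) (hbase : ∀ x : X, ∀ O ∈ 𝓝 x, ∃ B ∈ 𝓑, ball x B ⊆ O)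
    (A : Set X) :
    (derivedSet A).InjOn fun x (E : 𝓔) ↦ ((↑) : A → X) ⁻¹' ball x E := by
  intro x hx y _ hxy
  by_contra hne
  obtain ⟨Ox, Oy, hOx, hOy, hxOx, hyOy, hdisj⟩ := t2_separation hne
  obtain ⟨B, hB, hBy⟩ := hbase y Oy (hOy.mem_nhds hyOy)
  obtain ⟨E, hE, hEB, -, hEx, hinf⟩ := hnet B hB x Ox (hOx.mem_nhds hxOx) A
    fun V hV ↦ AccPt.infinite_inter_of_mem_nhds hx hV
  obtain ⟨a, hax, haA⟩ := hinf.nonempty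
  have hay : (⟨a, haA⟩ : A) ∈ ((↑) : A → X) ⁻¹' ball y E :=
    (congrArg ((⟨a, haA⟩ : A) ∈ ·) (congrFun hxy ⟨E, hE⟩)).mp hax
  exact hdisj.ne_of_mem (hEx hax) (hBy (Set.preimage_mono hEB hay)) rfl

theorem IsAsStarNetbase.mk_derivedSet_le [T2Space X] {𝓔 𝓑 : Set (Set (X × X))}
    (hnet : IsAsStarNetbase 𝓔 𝓑) (hbase : ∀ x : X, ∀ O ∈ 𝓝 x, ∃ B ∈ 𝓑, ball x B ⊆ O)
    (A : Set X) : #(derivedSet A) ≤ 2 ^ (#A * #𝓔) :=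
  calc #(derivedSet A) ≤ #(𝓔 → Set A) :=
        mk_le_of_injective (hnet.injOn_derivedSet hbase A).injective
    _ = 2 ^ (#A * #𝓔) := by rw [← power_def, mk_set, power_mul]

theorem Cardinal.le_two_power_mul {a κ : Cardinal} (hκ : κ ≠ 0) : a ≤ 2 ^ (a * κ) :=
  (cantor a).le.trans (power_le_power_left two_ne_zero (le_mul_right hκ))

theorem stmt_18_general {X : Type u} [TopologicalSpace X] [T2Space X] (κ : Cardinal.{u})
    (hκ : Cardinal.aleph0 ≤ κ) (𝓑 𝓔 : Set (Set (X × X)))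
    (hBbase : ∀ x : X, (∀ B ∈ 𝓑, ball x B ∈ nhds x) ∧
      ∀ O ∈ nhds x, ∃ B ∈ 𝓑, ball x B ⊆ O)
    (hcard : Cardinal.mk 𝓔 = κ)
    (hnet : ∀ B ∈ 𝓑, ∀ x : X, ∀ O ∈ nhds x, ∀ C : Set X,
      (∀ V ∈ nhds x, (V ∩ C).Infinite) →
      ∃ E ∈ 𝓔, E ⊆ B ∧ x ∈ ball x E ∧ ball x E ⊆ O ∧ (ball x E ∩ C).Infinite) :
    ∀ A : Set X, Cardinal.mk (closure A) ≤ 2 ^ (Cardinal.mk A * κ) := by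
  intro A
  rcases A.eq_empty_or_nonempty with rfl | hA
  · simp
  have hκ0 : κ ≠ 0 := (aleph0_pos.trans_le hκ).ne'
  have hinf : ℵ₀ ≤ 2 ^ (#A * κ) :=
    (hκ.trans (le_mul_left (mk_ne_zero_iff.2 hA.to_subtype))).trans (cantor _).le
  have hD : #(derivedSet A) ≤ 2 ^ (#A * κ) :=
    hcard ▸ IsAsStarNetbase.mk_derivedSet_le hnet (fun x ↦ (hBbase x).2) A
  calc #(closure A) = #(A ∪ derivedSet A : Set X) := by rw [closure_eq_self_union_derivedSet]
    _ ≤ #A + #(derivedSet A) := mk_union_le A _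
    _ ≤ 2 ^ (#A * κ) := add_le_of_le hinf (le_two_power_mul hκ0) hD

open UniformSpace in
/-- If a Hausdorff space `X` admits an `𝖺𝗌*`-netbase `(𝓔, 𝓑)` where `𝓔` has infinite
cardinality `κ` and is closed under finite unions, then the closure of every subset
`A ⊆ X` has cardinality at most `2 ^ (|A| * κ)`. -/
theorem stmt_18 {X : Type u} [TopologicalSpace X] [T2Space X] (κ : Cardinal.{u})
    (hκ : Cardinal.aleph0 ≤ κ) (𝓑 𝓔 : Set (Set (X × X)))
    (hBrefl : ∀ B ∈ 𝓑, SetRel.id ⊆ B)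
    (hBdir : ∀ B₁ ∈ 𝓑, ∀ B₂ ∈ 𝓑, ∃ B₃ ∈ 𝓑, B₃ ⊆ B₁ ∩ B₂)
    (hBbase : ∀ x : X, (∀ B ∈ 𝓑, ball x B ∈ nhds x) ∧
      ∀ O ∈ nhds x, ∃ B ∈ 𝓑, ball x B ⊆ O)
    (hcard : Cardinal.mk 𝓔 = κ)
    (hunion : ∀ E₁ ∈ 𝓔, ∀ E₂ ∈ 𝓔, E₁ ∪ E₂ ∈ 𝓔)
    (hnet : ∀ B ∈ 𝓑, ∀ x : X, ∀ O ∈ nhds x, ∀ C : Set X,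
      (∀ V ∈ nhds x, (V ∩ C).Infinite) →
      ∃ E ∈ 𝓔, E ⊆ B ∧ x ∈ ball x E ∧ ball x E ⊆ O ∧ (ball x E ∩ C).Infinite) :
    ∀ A : Set X, Cardinal.mk (closure A) ≤ 2 ^ (Cardinal.mk A * κ) :=
  stmt_18_general κ hκ 𝓑 𝓔 hBbase hcard hnet
end

section
/- Let κ be a regular uncountable cardinal and (λ_i)_{i∈κ} a sequence of cardinals with 1 < λ_i < κ for all i. Let X = {x ∈ ∏_{i∈κ} λ_i : x(i) ≠ 0 for only finitely many i}, topologized by the base of sets U_α[x] = {y ∈ X : y|α = x|α} for x ∈ X and α ∈ κ. Then for every open cover 𝒱 of X there exists an ordinal α ∈ κ such that for every x ∈ X the set U_α[x] is contained in some member of 𝒱; consequently X is paracompact. -/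
/-- The ordinals below the initial ordinal of the cardinal `κ`, i.e. `κ` viewed
as a well-ordered set. -/
abbrev SmallOrd (κ : Cardinal) := {o : Ordinal // o < κ.ord}

/-- The `σ`-product `⊙_{i ∈ κ} λ_i`: the finitely supported elements of the product
`∏_{i ∈ κ} λ_i` of the cardinals `λ i` (each element of `λ i` encoded as an ordinal
below `(λ i).ord`). -/
abbrev SigmaProd (κ : Cardinal) (lam : SmallOrd κ → Cardinal) :=
  {x : SmallOrd κ → Ordinal // (∀ i, x i < (lam i).ord) ∧ {i | x i ≠ 0}.Finite}

/-- The basic set `U_α[x] = {y : y|α = x|α}`. -/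
def basicSet {κ : Cardinal} {lam : SmallOrd κ → Cardinal}
    (x : SigmaProd κ lam) (α : Ordinal) : Set (SigmaProd κ lam) :=
  {y | ∀ i : SmallOrd κ, (i : Ordinal) < α → y.1 i = x.1 i}

/-- The topology on the `σ`-product generated by the base of sets `U_α[x]`,
`x ∈ X`, `α ∈ κ`. -/
instance (κ : Cardinal) (lam : SmallOrd κ → Cardinal) :
    TopologicalSpace (SigmaProd κ lam) :=
  TopologicalSpace.generateFrom
    {S | ∃ (x : SigmaProd κ lam) (α : Ordinal), α < κ.ord ∧ S = basicSet x α}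

/-! Every point `x` has a basic neighbourhood `U_{A x}[x]` inside a member of the cover. Each
`U_α[x]` only depends on `x|α`, and by regularity of `κ` and `λ_i < κ` there are fewer than `κ`
points supported below any `α < κ`, so `A` is bounded below `κ` on them. Closing off under this
bound gives `γ < κ` with `A x' ≤ γ` for every `x'` supported below `γ`; taking `x'` to be `x`
truncated at `γ` gives `U_γ[x] = U_γ[x'] ⊆ U_{A x'}[x']`. The sets `U_γ[x]` partition the space
into open sets, which form a locally finite refinement of the cover. -/

open Set Cardinal

universe u v

lemma Cardinal.IsRegular.iSup_lt_ord {κ : Cardinal.{u}} (hκ : κ.IsRegular) {ι : Type v}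
    {f : ι → Ordinal.{u}} (hι : Cardinal.lift.{u} #ι < Cardinal.lift.{v} κ)
    (hf : ∀ i, f i < κ.ord) :
    ⨆ i, f i < κ.ord :=
  Ordinal.lift_iSup_lt_of_lt_cof (by rwa [← Ordinal.lift_cof, hκ.cof_ord]) hf

lemma Cardinal.mk_finset_le_max (β : Type u) : #(Finset β) ≤ max ℵ₀ #β := by
  classical
  exact (mk_le_of_surjective List.toFinset_surjective).trans (mk_list_le_max β)

namespace SigmaProd

variable {κ : Cardinal.{u}}

section

variable {lam : SmallOrd κ → Cardinal.{v}}

lemma mem_basicSet_self (x : SigmaProd κ lam) (α : Ordinal) : x ∈ basicSet x α :=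
  fun _ _ ↦ rfl

lemma basicSet_anti (x : SigmaProd κ lam) : Antitone (basicSet x) :=
  fun _ _ hαβ _ hy i hi ↦ hy i (hi.trans_le hαβ)

lemma basicSet_eq_of_mem {x y : SigmaProd κ lam} {α : Ordinal} (h : y ∈ basicSet x α) :
    basicSet y α = basicSet x α := by
  ext z
  exact forall₂_congr fun i hi ↦ by rw [h i hi]

lemma eq_of_basicSet_inter_nonempty {x y : SigmaProd κ lam} {α : Ordinal}
    (h : (basicSet x α ∩ basicSet y α).Nonempty) : basicSet x α = basicSet y α := by
  obtain ⟨z, hzx, hzy⟩ := h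
  rw [← basicSet_eq_of_mem hzx, basicSet_eq_of_mem hzy]

lemma isTopologicalBasis_basicSet (hκ : κ ≠ 0) :
    TopologicalSpace.IsTopologicalBasis
      {S : Set (SigmaProd κ lam) | ∃ x α, α < κ.ord ∧ S = basicSet x α} where
  exists_subset_inter := by
    rintro _ ⟨y, α, hα, rfl⟩ _ ⟨z, β, hβ, rfl⟩ x ⟨hxy, hxz⟩
    refine ⟨basicSet x (max α β), ⟨x, _, max_lt hα hβ, rfl⟩, mem_basicSet_self x _, ?_⟩
    rw [← basicSet_eq_of_mem hxy, ← basicSet_eq_of_mem hxz]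
    exact subset_inter (basicSet_anti x (le_max_left α β)) (basicSet_anti x (le_max_right α β))
  sUnion_eq := eq_univ_of_forall fun x ↦
    ⟨_, ⟨x, 0, ord_pos.2 (pos_iff_ne_zero.2 hκ), rfl⟩, mem_basicSet_self x 0⟩
  eq_generateFrom := rfl

lemma isOpen_basicSet (x : SigmaProd κ lam) {α : Ordinal} (hα : α < κ.ord) :
    IsOpen (basicSet x α) :=
  TopologicalSpace.isOpen_generateFrom_of_mem ⟨x, α, hα, rfl⟩

lemma exists_basicSet_subset (hκ : κ ≠ 0) {U : Set (SigmaProd κ lam)} (hU : IsOpen U)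
    {x : SigmaProd κ lam} (hx : x ∈ U) : ∃ α < κ.ord, basicSet x α ⊆ U := by
  obtain ⟨_, ⟨y, α, hα, rfl⟩, hxy, hyU⟩ :=
    (isTopologicalBasis_basicSet hκ).exists_subset_of_mem_open hx hU
  exact ⟨α, hα, basicSet_eq_of_mem hxy ▸ hyU⟩

lemma paracompactSpace_of_exists_basicSet_subset
    (h : ∀ 𝒱 : Set (Set (SigmaProd κ lam)), (∀ V ∈ 𝒱, IsOpen V) → ⋃₀ 𝒱 = Set.univ →
      ∃ α < κ.ord, ∀ x, ∃ V ∈ 𝒱, basicSet x α ⊆ V) :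
    ParacompactSpace (SigmaProd κ lam) where
  locallyFinite_refinement ι s hs hcover := by
    obtain ⟨α, hα, hsub⟩ := h (range s) (forall_mem_range.2 hs) (by rwa [sUnion_range])
    refine ⟨range fun x : SigmaProd κ lam ↦ basicSet x α, Subtype.val, ?_, ?_, ?_, ?_⟩
    · rintro ⟨_, x, rfl⟩
      exact isOpen_basicSet x hα
    · exact eq_univ_of_forall fun x ↦ mem_iUnion.2 ⟨⟨_, x, rfl⟩, mem_basicSet_self x α⟩
    · intro x
      refine ⟨basicSet x α, (isOpen_basicSet x hα).mem_nhds (mem_basicSet_self x α),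
        (finite_singleton ⟨basicSet x α, x, rfl⟩).subset ?_⟩
      rintro ⟨_, y, rfl⟩ hy
      exact Subtype.ext (eq_of_basicSet_inter_nonempty hy)
    · rintro ⟨_, x, rfl⟩
      obtain ⟨_, ⟨i, rfl⟩, hx⟩ := hsub x
      exact ⟨i, hx⟩

def supportedBelow (α : Ordinal) : Set (SigmaProd κ lam) :=
  {x | ∀ i, x.1 i ≠ 0 → (i : Ordinal) < α}

noncomputable def trunc (x : SigmaProd κ lam) (α : Ordinal) : SigmaProd κ lam :=
  ⟨fun i ↦ if (i : Ordinal) < α then x.1 i else 0,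
    fun i ↦ by
      dsimp only
      split_ifs
      · exact x.2.1 i
      · exact zero_le.trans_lt (x.2.1 i),
    x.2.2.subset fun i hi ↦ by
      simp only [mem_ofPred_eq, ne_eq, ite_eq_right_iff, not_forall] at hi ⊢
      exact hi.2⟩

lemma trunc_mem_supportedBelow (x : SigmaProd κ lam) (α : Ordinal) :
    trunc x α ∈ supportedBelow α := fun i hi ↦ by
  by_contra h
  exact hi (if_neg h)

lemma mem_basicSet_trunc (x : SigmaProd κ lam) (α : Ordinal) : x ∈ basicSet (trunc x α) α :=
  fun _ hi ↦ (if_pos hi).symm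

lemma supportedBelow_mono : Monotone (supportedBelow (lam := lam)) :=
  fun _ _ hαβ _ hx i hi ↦ (hx i hi).trans_le hαβ

lemma exists_mem_supportedBelow {g : ℕ → Ordinal} (hg : Monotone g) {x : SigmaProd κ lam}
    (hx : ∀ i, x.1 i ≠ 0 → ∃ n, (i : Ordinal) < g n) : ∃ n, x ∈ supportedBelow (g n) :=
  ((Filter.eventually_all_finite x.2.2).2 fun i hi ↦
    let ⟨n, hn⟩ := hx i hi
    Filter.eventually_atTop.2 ⟨n, fun _ hm ↦ hn.trans_le (hg hm)⟩).exists

noncomputable def graph (x : SigmaProd κ lam) : Finset (Ordinal.{u} × Ordinal.{v}) :=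
  x.2.2.toFinset.image fun i : SmallOrd κ ↦ ((i : Ordinal), x.1 i)

lemma mk_mem_graph {x : SigmaProd κ lam} {i : SmallOrd κ} {a : Ordinal} :
    ((i : Ordinal), a) ∈ graph x ↔ x.1 i ≠ 0 ∧ x.1 i = a := by
  simp only [graph, Finset.mem_image, Finite.mem_toFinset, mem_ofPred_eq, Prod.mk.injEq]
  constructor
  · rintro ⟨j, hj, hji, rfl⟩
    obtain rfl := Subtype.ext hji
    exact ⟨hj, rfl⟩
  · rintro ⟨hi, rfl⟩
    exact ⟨i, hi, rfl, rfl⟩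

lemma graph_injective : Function.Injective (graph (κ := κ) (lam := lam)) := by
  have key : ∀ x y : SigmaProd κ lam, graph x = graph y → ∀ i, x.1 i ≠ 0 → y.1 i = x.1 i :=
    fun x y h i hi ↦ (mk_mem_graph.1 (h ▸ mk_mem_graph.2 ⟨hi, rfl⟩)).2
  intro x y h
  refine Subtype.ext (funext fun i ↦ ?_)
  by_cases hx : x.1 i = 0
  · by_cases hy : y.1 i = 0
    · rw [hx, hy]
    · exact key y x h.symm i hy
  · exact (key x y h i hx).symm

lemma mk_supportedBelow_le {α : Ordinal} {μ : Ordinal}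
    (hμ : ∀ i : SmallOrd κ, (i : Ordinal) < α → (lam i).ord ≤ μ) :
    #(supportedBelow (lam := lam) α) ≤ #(Finset ↥(Iio α ×ˢ Iio μ)) := by
  classical
  have hsub : ∀ x : SigmaProd κ lam, x ∈ supportedBelow α →
      ∀ p ∈ graph x, p ∈ Iio α ×ˢ Iio μ := by
    intro x hx p hp
    obtain ⟨i, hi, rfl⟩ := Finset.mem_image.1 hp
    have hi : x.1 i ≠ 0 := by simpa using hi
    have hiα := hx i hi
    exact ⟨hiα, (x.2.1 i).trans_le (hμ i hiα)⟩
  refine mk_le_of_injective (f := fun x ↦ (graph x.1).subtype (· ∈ Iio α ×ˢ Iio μ)) ?_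
  intro x y hxy
  have := congrArg (Finset.map (Function.Embedding.subtype _)) hxy
  simp only [Finset.subtype_map_of_mem (hsub x x.2), Finset.subtype_map_of_mem (hsub y y.2)]
    at this
  exact Subtype.ext (graph_injective this)

end

section

variable {lam : SmallOrd κ → Cardinal.{u}}

lemma mk_supportedBelow_lt (hreg : κ.IsRegular) (hunc : ℵ₀ < κ) (hlam : ∀ i, lam i < κ)
    {α : Ordinal} (hα : α < κ.ord) : #(supportedBelow (lam := lam) α) < lift.{u + 1} κ := by
  have hIio : ∀ {β : Ordinal.{u}}, β < κ.ord → #(Iio β) < lift.{u + 1} κ := fun hβ ↦ by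
    rw [mk_Iio_ordinal, lift_lt]
    exact lt_ord.1 hβ
  set μ := ⨆ i : Iio α, (lam ⟨i, i.2.trans hα⟩).ord
  have hμ : μ < κ.ord := hreg.iSup_lt_ord (by simpa using hIio hα) fun i ↦ ord_lt_ord.2 (hlam _)
  have hP : #↥(Iio α ×ˢ Iio μ) < lift.{u + 1} κ := by
    rw [mk_congr (Equiv.Set.prod _ _), mk_prod, lift_id, lift_id]
    exact mul_lt_of_lt (aleph0_le_lift.2 hreg.aleph0_le) (hIio hα) (hIio hμ)
  calc #(supportedBelow α) ≤ #(Finset ↥(Iio α ×ˢ Iio μ)) :=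
        mk_supportedBelow_le fun i hi ↦
          le_ciSup (f := fun i : Iio α ↦ (lam ⟨i, i.2.trans hα⟩).ord)
            Ordinal.bddAbove_of_small ⟨i, hi⟩
    _ ≤ max ℵ₀ #↥(Iio α ×ˢ Iio μ) := mk_finset_le_max _
    _ < lift.{u + 1} κ := max_lt (aleph0_lt_lift.2 hunc) hP

lemma iSup_supportedBelow_lt (hreg : κ.IsRegular) (hunc : ℵ₀ < κ) (hlam : ∀ i, lam i < κ)
    {f : SigmaProd κ lam → Ordinal.{u}} (hf : ∀ x, f x < κ.ord) {α : Ordinal} (hα : α < κ.ord) :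
    ⨆ x : supportedBelow α, f x.1 < κ.ord :=
  hreg.iSup_lt_ord (by rw [lift_id'.{u, u + 1}]; exact mk_supportedBelow_lt hreg hunc hlam hα)
    fun x ↦ hf x

/-- The ordinal is `γ = sup_n F^[n] 0` for `F α = sup {f x | x ∈ supportedBelow α}`; a point
supported below `γ` has finite support, hence is supported below some `F^[n] 0`. -/
lemma exists_forall_supportedBelow_le (hreg : κ.IsRegular) (hunc : ℵ₀ < κ)
    (hlam : ∀ i, lam i < κ) {f : SigmaProd κ lam → Ordinal.{u}} (hf : ∀ x, f x < κ.ord) :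
    ∃ γ < κ.ord, ∀ x ∈ supportedBelow γ, f x ≤ γ := by
  set F : Ordinal → Ordinal := fun α ↦ ⨆ x : supportedBelow α, f x.1
  have hbdd : ∀ α, BddAbove (range fun x : supportedBelow α ↦ f x.1) :=
    fun α ↦ ⟨κ.ord, forall_mem_range.2 fun x ↦ (hf x).le⟩
  have hle : ∀ {α}, ∀ x ∈ supportedBelow α, f x ≤ F α := fun x hx ↦ le_ciSup (hbdd _) ⟨x, hx⟩
  have hF : Monotone F := fun α β hαβ ↦ ciSup_le' fun x ↦ hle x (supportedBelow_mono hαβ x.2)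
  refine ⟨Ordinal.nfp F 0, nfp_lt_ord_of_isRegular hreg hunc.ne'
    (fun α hα ↦ iSup_supportedBelow_lt hreg hunc hlam hf hα) (ord_pos.2 hreg.pos), fun x hx ↦ ?_⟩
  obtain ⟨n, hn⟩ := exists_mem_supportedBelow (hF.monotone_iterate_of_le_map zero_le)
    fun i hi ↦ Ordinal.lt_nfp_iff.1 (hx i hi)
  calc f x ≤ F (F^[n] 0) := hle x hn
    _ = F^[n + 1] 0 := (Function.iterate_succ_apply' F n 0).symm
    _ ≤ Ordinal.nfp F 0 := Ordinal.iterate_le_nfp F 0 (n + 1)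

theorem exists_basicSet_subset_of_isOpen_cover (hreg : κ.IsRegular) (hunc : ℵ₀ < κ)
    (hlam : ∀ i, lam i < κ) {𝒱 : Set (Set (SigmaProd κ lam))} (hopen : ∀ V ∈ 𝒱, IsOpen V)
    (hcover : ⋃₀ 𝒱 = Set.univ) :
    ∃ γ < κ.ord, ∀ x : SigmaProd κ lam, ∃ V ∈ 𝒱, basicSet x γ ⊆ V := by
  have hbasic : ∀ x : SigmaProd κ lam, ∃ α < κ.ord, ∃ V ∈ 𝒱, basicSet x α ⊆ V := fun x ↦ by
    obtain ⟨V, hV, hxV⟩ := sUnion_eq_univ_iff.1 hcover x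
    obtain ⟨α, hα, hαV⟩ := exists_basicSet_subset hreg.pos.ne' (hopen V hV) hxV
    exact ⟨α, hα, V, hV, hαV⟩
  choose A hA V hV hAV using hbasic
  obtain ⟨γ, hγ, hAγ⟩ := exists_forall_supportedBelow_le hreg hunc hlam hA
  refine ⟨γ, hγ, fun x ↦ ⟨V (trunc x γ), hV _, ?_⟩⟩
  calc basicSet x γ = basicSet (trunc x γ) γ := basicSet_eq_of_mem (mem_basicSet_trunc x γ)
    _ ⊆ basicSet (trunc x γ) (A (trunc x γ)) :=
        basicSet_anti _ (hAγ _ (trunc_mem_supportedBelow x γ))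
    _ ⊆ V (trunc x γ) := hAV _

end

end SigmaProd

/-- For a regular uncountable cardinal `κ` and cardinals `1 < λ_i < κ`, every open cover
`𝒱` of the `σ`-product `X = ⊙_{i ∈ κ} λ_i` admits an ordinal `α ∈ κ` such that every
basic set `U_α[x]` is contained in some member of `𝒱`; consequently `X` is paracompact. -/
theorem stmt_19 (κ : Cardinal) (hreg : κ.IsRegular) (hunc : Cardinal.aleph0 < κ)
    (lam : SmallOrd κ → Cardinal) (hlam : ∀ i, 1 < lam i ∧ lam i < κ) :
    (∀ 𝒱 : Set (Set (SigmaProd κ lam)), (∀ V ∈ 𝒱, IsOpen V) → ⋃₀ 𝒱 = Set.univ →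
      ∃ α < κ.ord, ∀ x : SigmaProd κ lam, ∃ V ∈ 𝒱, basicSet x α ⊆ V) ∧
    ParacompactSpace (SigmaProd κ lam) := by
  have huniform := fun 𝒱 (hopen : ∀ V ∈ 𝒱, IsOpen V) hcover ↦
    SigmaProd.exists_basicSet_subset_of_isOpen_cover hreg hunc (fun i ↦ (hlam i).2) hopen hcover
  exact ⟨huniform, SigmaProd.paracompactSpace_of_exists_basicSet_subset huniform⟩
end
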